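/- arXiv:1801.08380 — 4 statements merged into one kernel-verified Lean document; each statement's English description precedes it below -/
import Mathlib

section
/- Let K be a connected finite abstract simplicial complex, let p be a vertex of K, and let V be a discrete gradient vector field on K with m_0 > 1 critical simplices of dimension 0 and m critical simplices in total. Then there exists another discrete gradient vector field W on K whose only critical simplex of dimension 0 is p and which has exactly m − 2(m_0 − 1) critical simplices in total. -/
namespace MorseApprox

variable {α : Type*}

/-- A (finite abstract) simplicial complex: a collection of nonempty finite simplices
closed under taking nonempty subsets. -/
def IsComplex (K : Set (Finset α)) : Prop :=
  (∀ σ ∈ K, σ.Nonempty) ∧ ∀ σ ∈ K, ∀ τ : Finset α, τ ⊆ σ → τ.Nonempty → τ ∈ K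

def IsSubcomplex (L K : Set (Finset α)) : Prop :=
  L ⊆ K ∧ IsComplex L

def IsMaximalFace (K : Set (Finset α)) (τ : Finset α) : Prop :=
  τ ∈ K ∧ ∀ ρ ∈ K, τ ⊆ ρ → ρ = τ

/-- A free face: a non-maximal simplex contained in a unique maximal simplex. -/
def IsFreeFace (K : Set (Finset α)) (σ : Finset α) : Prop :=
  σ ∈ K ∧ ¬ IsMaximalFace K σ ∧ ∃! τ : Finset α, IsMaximalFace K τ ∧ σ ⊆ τ

/-- An elementary collapse removes a free face `σ` together with its unique maximal
coface `τ`, provided `dim τ = dim σ + 1`. -/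
def ElemCollapse (K K' : Set (Finset α)) : Prop :=
  ∃ σ τ : Finset α, IsFreeFace K σ ∧ IsMaximalFace K τ ∧ σ ⊆ τ ∧
    τ.card = σ.card + 1 ∧ K' = K \ {σ, τ}

/-- `K` collapses to `L` via a finite sequence of elementary collapses. -/
def Collapses (K L : Set (Finset α)) : Prop :=
  Relation.ReflTransGen ElemCollapse K L

/-- `K` is collapsible if it collapses to a single vertex. -/
def Collapsible (K : Set (Finset α)) : Prop :=
  ∃ p : α, Collapses K ({({p} : Finset α)} : Set (Finset α))

/-- `K` is connected: its 1-skeleton is connected as a graph. -/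
def ComplexConnected [DecidableEq α] (K : Set (Finset α)) : Prop :=
  ∀ x y : α, ({x} : Finset α) ∈ K → ({y} : Finset α) ∈ K →
    Relation.ReflTransGen (fun a b : α => ({a, b} : Finset α) ∈ K ∧ a ≠ b) x y

/-- `σ` is a facet of `τ`. -/
def IsFacet (σ τ : Finset α) : Prop :=
  σ ⊆ τ ∧ τ.card = σ.card + 1

/-- The step relation of the Hasse diagram of `K` modified by the matching `V`:
an edge `τ → σ'` for every facet `σ'` of `τ` with `(σ', τ) ∉ V`, and an
edge `σ → τ` for every `(σ, τ) ∈ V`. -/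
def VStep (K : Set (Finset α)) (V : Set (Finset α × Finset α)) :
    Finset α → Finset α → Prop := fun x y =>
  (x ∈ K ∧ y ∈ K ∧ IsFacet y x ∧ (y, x) ∉ V) ∨ (x, y) ∈ V

/-- A discrete gradient vector field (Morse matching) on `K`. -/
def IsDGVF (K : Set (Finset α)) (V : Set (Finset α × Finset α)) : Prop :=
  (∀ p ∈ V, p.1 ∈ K ∧ p.2 ∈ K ∧ IsFacet p.1 p.2) ∧
  (∀ p ∈ V, ∀ q ∈ V,
    (p.1 = q.1 ∨ p.1 = q.2 ∨ p.2 = q.1 ∨ p.2 = q.2) → p = q) ∧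
  (∀ σ : Finset α, ¬ Relation.TransGen (VStep K V) σ σ)

/-- A critical simplex of a gradient vector field. -/
def IsCritical (K : Set (Finset α)) (V : Set (Finset α × Finset α))
    (σ : Finset α) : Prop :=
  σ ∈ K ∧ ∀ p ∈ V, σ ≠ p.1 ∧ σ ≠ p.2

noncomputable def criticalCount (K : Set (Finset α))
    (V : Set (Finset α × Finset α)) : ℕ :=
  {σ : Finset α | IsCritical K V σ}.ncard

noncomputable def regularCount (V : Set (Finset α × Finset α)) : ℕ :=
  {σ : Finset α | ∃ p ∈ V, σ = p.1 ∨ σ = p.2}.ncard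

def twoSimplices (K : Set (Finset α)) : Set (Finset α) :=
  {σ | σ ∈ K ∧ σ.card = 3}

/-- `L` is an erasable subcomplex of `K`. -/
def ErasableSubcomplex (K L : Set (Finset α)) : Prop :=
  ∃ M : Set (Finset α), IsSubcomplex M K ∧ Collapses K M ∧
    K \ M ⊆ L ∧ twoSimplices K \ M = twoSimplices L

/-- A 2-complex is erasable if it collapses to a complex of dimension at most 1. -/
def Erasable (K : Set (Finset α)) : Prop :=
  ∃ L : Set (Finset α), Collapses K L ∧ ∀ σ ∈ L, σ.card ≤ 2

/-- A collapse of `K` onto `M` induced by the gradient `V`: `K ∖ M` is a union of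
pairs of `V`. -/
def InducedCollapse (K M : Set (Finset α)) (V : Set (Finset α × Finset α)) : Prop :=
  IsSubcomplex M K ∧
    ∀ ρ ∈ K \ M, ∃ p ∈ V, (ρ = p.1 ∨ ρ = p.2) ∧ p.1 ∈ K \ M ∧ p.2 ∈ K \ M

/-- `σ` is eventually free in `K`. -/
def EventuallyFree (K : Set (Finset α)) (σ : Finset α) : Prop :=
  ∃ L : Set (Finset α), Collapses K L ∧ IsFreeFace L σ

/-- `σ` is eventually free in `K` through the gradient `V`. -/
def EventuallyFreeThrough (K : Set (Finset α)) (V : Set (Finset α × Finset α))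
    (σ : Finset α) : Prop :=
  ∃ L : Set (Finset α), InducedCollapse K L V ∧ Collapses K L ∧ IsFreeFace L σ

/-- `L` is erasable in `K` through the gradient `V`. -/
def ErasableThrough (K L : Set (Finset α)) (V : Set (Finset α × Finset α)) : Prop :=
  ∃ M : Set (Finset α), InducedCollapse K M V ∧ Collapses K M ∧
    K \ M ⊆ L ∧ twoSimplices K \ M = twoSimplices L

/-- A discrete Morse function on `K`: monotone, and any two distinct simplices with
the same value form a facet pair (hence every level set is a singleton or such a pair). -/
def IsDiscreteMorse (K : Set (Finset α)) (f : Finset α → ℝ) : Prop :=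
  (∀ σ ∈ K, ∀ τ ∈ K, σ ⊆ τ → f σ ≤ f τ) ∧
  (∀ σ ∈ K, ∀ τ ∈ K, σ ≠ τ → f σ = f τ → IsFacet σ τ ∨ IsFacet τ σ)

/-- `er K`: the minimum number of 2-simplices whose removal makes `K` erasable. -/
noncomputable def er (K : Set (Finset α)) : ℕ :=
  sInf {n | ∃ C : Set (Finset α), C ⊆ twoSimplices K ∧ Erasable (K \ C) ∧ n = C.ncard}

/-- The maximum number of regular (matched) simplices over all gradient vector
fields on `K`. -/
noncomputable def optMaxMM (K : Set (Finset α)) : ℕ :=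
  sSup {n | ∃ V : Set (Finset α × Finset α), IsDGVF K V ∧ n = regularCount V}



/-! ### Auxiliary machinery for `stmt0` -/

section Stmt0Aux
set_option linter.unusedSectionVars false

variable [DecidableEq α] {K : Set (Finset α)} {V : Set (Finset α × Finset α)}

open Classical in
/-- Representative of the matching class of `x`: if `x` is the top element of a
matched pair, its bottom element; otherwise `x` itself. -/
noncomputable def rep (V : Set (Finset α × Finset α)) (x : Finset α) : Finset α :=
  if h : ∃ q, q ∈ V ∧ x = q.2 then h.choose.1 else x

theorem rep_snd (hV : IsDGVF K V) {q : Finset α × Finset α} (hq : q ∈ V) :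
    rep V q.2 = q.1 := by
  have h : ∃ r, r ∈ V ∧ q.2 = r.2 := ⟨q, hq, rfl⟩
  have hs := h.choose_spec
  have := hV.2.1 h.choose hs.1 q hq (by
    right; right; right; exact hs.2.symm)
  rw [rep, dif_pos h, this]

theorem rep_fst (hV : IsDGVF K V) {q : Finset α × Finset α} (hq : q ∈ V) :
    rep V q.1 = q.1 := by
  rw [rep]
  split_ifs with h
  · exfalso
    have hs := h.choose_spec
    have heq := hV.2.1 q hq h.choose hs.1 (Or.inr (Or.inl hs.2))
    have hf := (hV.1 q hq).2.2
    rw [← heq] at hs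
    have : q.2.card = q.1.card + 1 := hf.2
    rw [← hs.2] at this
    omega
  · rfl

theorem rep_self (hx : ∀ q ∈ V, x ≠ q.2) : rep V x = x := by
  rw [rep, dif_neg]
  rintro ⟨q, hq, he⟩
  exact hx q hq he

theorem rep_cases (V : Set (Finset α × Finset α)) (x : Finset α) :
    rep V x = x ∨ (rep V x, x) ∈ V := by
  rw [rep]
  split_ifs with h
  · right
    have hs := h.choose_spec
    have : (h.choose.1, x) = h.choose := Prod.ext_iff.mpr ⟨rfl, hs.2⟩
    rw [this]
    exact hs.1
  · left; rfl

/-- The step relation between matching classes induced by the Hasse diagram. -/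
def CRel (K : Set (Finset α)) (V : Set (Finset α × Finset α)) (a b : Finset α) : Prop :=
  ∃ x y, x ∈ K ∧ y ∈ K ∧ IsFacet y x ∧ (y, x) ∉ V ∧ rep V x = a ∧ rep V y = b ∧ a ≠ b

theorem crel_desc (hV : IsDGVF K V) {a b : Finset α} (h : CRel K V a b) :
    b.card ≤ a.card ∧ (b.card = a.card → Relation.TransGen (VStep K V) a b) := by
  obtain ⟨x, y, hxK, hyK, hf, hnV, hrx, hry, hab⟩ := h
  have hcxy : x.card = y.card + 1 := hf.2
  rcases rep_cases V x with hx | hx <;> rcases rep_cases V y with hy | hy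
  · rw [hrx] at hx; rw [hry] at hy
    subst hx; subst hy
    constructor
    · omega
    · intro hc; omega
  · rw [hry] at hy
    have : y.card = b.card + 1 := (hV.1 _ hy).2.2.2
    rw [hrx] at hx
    subst hx
    constructor
    · omega
    · intro hc; omega
  · rw [hrx] at hx; rw [hry] at hy
    have hcx : x.card = a.card + 1 := (hV.1 _ hx).2.2.2
    subst hy
    have hcb : b.card = a.card := by omega
    refine ⟨le_of_eq hcb, fun _ => ?_⟩
    exact Relation.TransGen.head (Or.inr hx)
      (Relation.TransGen.single (Or.inl ⟨hxK, hyK, hf, hnV⟩))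
  · rw [hrx] at hx; rw [hry] at hy
    have hcx : x.card = a.card + 1 := (hV.1 _ hx).2.2.2
    have hcy : y.card = b.card + 1 := (hV.1 _ hy).2.2.2
    constructor
    · omega
    · intro hc; omega

theorem crel_transGen_desc (hV : IsDGVF K V) {a b : Finset α}
    (h : Relation.TransGen (CRel K V) a b) :
    b.card ≤ a.card ∧ (b.card = a.card → Relation.TransGen (VStep K V) a b) := by
  induction h with
  | single h => exact crel_desc hV h
  | tail _ h ih =>
    have h2 := crel_desc hV h
    refine ⟨h2.1.trans ih.1, fun hc => ?_⟩
    have h3 : _ ≤ _ := ih.1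
    have h4 : _ ≤ _ := h2.1
    exact (ih.2 (by omega)).trans (h2.2 (by omega))

theorem crel_acyclic (hV : IsDGVF K V) (a : Finset α) :
    ¬ Relation.TransGen (CRel K V) a a := by
  intro h
  exact hV.2.2 a ((crel_transGen_desc hV h).2 rfl)

/-- An order-compatible value for the class of `x`. -/
noncomputable def FV (K : Set (Finset α)) (V : Set (Finset α × Finset α))
    (x : Finset α) : ℕ :=
  {w | Relation.ReflTransGen (CRel K V) (rep V x) w}.ncard

theorem FV_pair (hV : IsDGVF K V) {q : Finset α × Finset α} (hq : q ∈ V) :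
    FV K V q.1 = FV K V q.2 := by
  unfold FV
  rw [rep_fst hV hq, rep_snd hV hq]

theorem reach_finite (hfin : K.Finite) (c : Finset α) :
    {w | Relation.ReflTransGen (CRel K V) c w}.Finite := by
  apply Set.Finite.subset ((hfin.image (rep V)).insert c)
  intro w hw
  simp only [Set.mem_setOf_eq] at hw
  induction hw with
  | refl => exact Set.mem_insert _ _
  | tail _ h _ =>
    obtain ⟨x, y, _, hyK, _, _, _, hry, _⟩ := h
    exact Set.mem_insert_of_mem _ ⟨y, hyK, hry⟩

theorem FV_lt (hfin : K.Finite) (hV : IsDGVF K V) {a b : Finset α}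
    (haK : a ∈ K) (hbK : b ∈ K) (hf : IsFacet b a) (hnV : (b, a) ∉ V) :
    FV K V b < FV K V a := by
  have hcab : a.card = b.card + 1 := hf.2
  have hne : rep V a ≠ rep V b := by
    intro he
    rcases rep_cases V a with hx | hx <;> rcases rep_cases V b with hy | hy
    · rw [hx, hy] at he
      rw [he] at hcab; omega
    · rw [hx] at he
      rw [← he] at hy
      have : b.card = a.card + 1 := (hV.1 _ hy).2.2.2
      omega
    · rw [hy] at he
      rw [he] at hx
      exact hnV hx
    · rw [he] at hx
      have heq := hV.2.1 _ hx _ hy (Or.inl rfl)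
      have : a = b := congrArg Prod.snd heq
      rw [this] at hcab; omega
  have hcrel : CRel K V (rep V a) (rep V b) := ⟨a, b, haK, hbK, hf, hnV, rfl, refl _, hne⟩
  have hsub : {w | Relation.ReflTransGen (CRel K V) (rep V b) w} ⊆
      {w | Relation.ReflTransGen (CRel K V) (rep V a) w} :=
    fun w hw => Relation.ReflTransGen.head hcrel hw
  have hmem : rep V a ∈ {w | Relation.ReflTransGen (CRel K V) (rep V a) w} :=
    Relation.ReflTransGen.refl
  have hnmem : rep V a ∉ {w | Relation.ReflTransGen (CRel K V) (rep V b) w} := by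
    intro hw
    exact crel_acyclic hV (rep V a) (Relation.TransGen.head' hcrel hw)
  unfold FV
  exact Set.ncard_lt_ncard ((Set.ssubset_iff_of_subset hsub).mpr ⟨rep V a, hmem, hnmem⟩)
    (reach_finite hfin _)


/-- The graph on vertices of `K` whose edges are the `1`-simplices of `K` that are
not matched with a `2`-simplex by `V`. -/
def Gr (K : Set (Finset α)) (V : Set (Finset α × Finset α)) : SimpleGraph α where
  Adj a b := a ≠ b ∧ ({a, b} : Finset α) ∈ K ∧ ∀ t, (({a, b} : Finset α), t) ∉ V
  symm := by
    refine ⟨fun a b h => ?_⟩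
    refine ⟨h.1.symm, ?_, ?_⟩
    · rw [Finset.pair_comm]; exact h.2.1
    · rw [Finset.pair_comm]; exact h.2.2
  loopless := ⟨fun a h => h.1 rfl⟩

theorem edge_reachable (hfin : K.Finite) (hK : IsComplex K) (hV : IsDGVF K V) :
    ∀ e ∈ K, ∀ a b : α, e = ({a, b} : Finset α) → (Gr K V).Reachable a b := by
  classical
  set S : Set (Finset α) :=
    {e | e ∈ K ∧ ∃ a b : α, e = ({a, b} : Finset α) ∧ ¬ (Gr K V).Reachable a b} with hS
  have hSfin : S.Finite := hfin.subset (fun e he => he.1)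
  have hstep : ∀ e ∈ S, ∃ e' ∈ S, Relation.TransGen (VStep K V) e e' := by
    rintro e ⟨heK, a, b, hab, hnr⟩
    have hne : a ≠ b := by rintro rfl; exact hnr (SimpleGraph.Reachable.refl a)
    have hnadj : ¬ (Gr K V).Adj a b := fun h => hnr h.reachable
    have hmt : ∃ t, (e, t) ∈ V := by
      by_contra hc
      push_neg at hc
      rw [hab] at hc
      exact hnadj ⟨hne, hab ▸ heK, hc⟩
    obtain ⟨t, htV⟩ := hmt
    have h1 := hV.1 _ htV
    have htK : t ∈ K := h1.2.1
    have hsub : e ⊆ t := h1.2.2.1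
    have hcard : t.card = e.card + 1 := h1.2.2.2
    have hecard : e.card = 2 := by rw [hab]; exact Finset.card_pair hne
    have hsd : (t \ e).card = 1 := by rw [Finset.card_sdiff_of_subset hsub]; omega
    obtain ⟨w, hw⟩ := Finset.card_eq_one.mp hsd
    have hwmem : w ∈ t \ e := by rw [hw]; exact Finset.mem_singleton_self w
    have hwt : w ∈ t := (Finset.mem_sdiff.mp hwmem).1
    have hwe : w ∉ e := (Finset.mem_sdiff.mp hwmem).2
    have hat : a ∈ t := hsub (by rw [hab]; simp)
    have hbt : b ∈ t := hsub (by rw [hab]; simp)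
    have key : ∀ x : α, x ∈ t → x ≠ w → ¬ (Gr K V).Reachable x w →
        ∃ e' ∈ S, Relation.TransGen (VStep K V) e e' := by
      intro x hxt hxw hbad
      set e' : Finset α := ({x, w} : Finset α) with he'
      have he'sub : e' ⊆ t := by
        rw [he', Finset.insert_subset_iff, Finset.singleton_subset_iff]
        exact ⟨hxt, hwt⟩
      have he'K : e' ∈ K := hK.2 t htK e' he'sub ⟨x, by rw [he']; simp⟩
      have he'card : e'.card = 2 := Finset.card_pair hxw
      have he'ne : e' ≠ e := by
        intro hc
        exact hwe (hc ▸ (by rw [he']; simp : w ∈ e'))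
      have hfacet : IsFacet e' t := ⟨he'sub, by omega⟩
      have hnV' : (e', t) ∉ V := by
        intro hc
        have := hV.2.1 _ htV _ hc (Or.inr (Or.inr (Or.inr rfl)))
        exact he'ne (congrArg Prod.fst this).symm
      refine ⟨e', ⟨he'K, x, w, rfl, hbad⟩, ?_⟩
      exact Relation.TransGen.head (Or.inr htV)
        (Relation.TransGen.single (Or.inl ⟨htK, he'K, hfacet, hnV'⟩))
    have hone : ¬ (Gr K V).Reachable a w ∨ ¬ (Gr K V).Reachable b w := by
      by_contra hc
      push_neg at hc
      exact hnr (hc.1.trans hc.2.symm)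
    rcases hone with hcase | hcase
    · exact key a hat (fun h => hwe (by rw [hab, ← h]; simp)) hcase
    · exact key b hbt (fun h => hwe (by rw [hab, ← h]; simp)) hcase
  have hSempty : S = ∅ := by
    by_contra hne
    obtain ⟨e₀, he₀⟩ := Set.nonempty_iff_ne_empty.mpr hne
    obtain ⟨e, heS, hemin⟩ := Set.exists_min_image S
      (fun e => {e' | e' ∈ S ∧ Relation.TransGen (VStep K V) e e'}.ncard) hSfin ⟨e₀, he₀⟩
    obtain ⟨e', he'S, htg⟩ := hstep e heS
    have hsub : {x | x ∈ S ∧ Relation.TransGen (VStep K V) e' x} ⊆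
        {x | x ∈ S ∧ Relation.TransGen (VStep K V) e x} :=
      fun x hx => ⟨hx.1, htg.trans hx.2⟩
    have hmem : e' ∈ {x | x ∈ S ∧ Relation.TransGen (VStep K V) e x} := ⟨he'S, htg⟩
    have hnmem : e' ∉ {x | x ∈ S ∧ Relation.TransGen (VStep K V) e' x} :=
      fun hx => hV.2.2 e' hx.2
    have hlt := Set.ncard_lt_ncard ((Set.ssubset_iff_of_subset hsub).mpr ⟨e', hmem, hnmem⟩)
      (hSfin.subset (fun x hx => hx.1))
    exact absurd (hemin e' he'S) (by omega)
  intro e heK a b hab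
  by_contra hnr
  have : e ∈ S := ⟨heK, a, b, hab, hnr⟩
  rw [hSempty] at this
  exact this

theorem vert_reachable (hfin : K.Finite) (hK : IsComplex K) (hconn : ComplexConnected K)
    (hV : IsDGVF K V) {p v : α} (hp : ({p} : Finset α) ∈ K) (hv : ({v} : Finset α) ∈ K) :
    (Gr K V).Reachable p v := by
  have h := hconn p v hp hv
  induction h with
  | refl => exact SimpleGraph.Reachable.refl p
  | @tail b c _ h ih =>
    have hbK : ({b} : Finset α) ∈ K := hK.2 _ h.1 {b} (by simp) ⟨b, by simp⟩
    exact (ih hbK).trans (edge_reachable hfin hK hV _ h.1 b c rfl)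

open Classical in
/-- The parent of a vertex in a breadth-first spanning tree rooted at `p` of the
graph `Gr K V`. -/
noncomputable def par (K : Set (Finset α)) (V : Set (Finset α × Finset α)) (p v : α) : α :=
  if h : ∃ u, (Gr K V).Adj v u ∧ (Gr K V).dist p u + 1 = (Gr K V).dist p v then h.choose
  else p

theorem par_spec (hfin : K.Finite) (hK : IsComplex K) (hconn : ComplexConnected K)
    (hV : IsDGVF K V) {p v : α} (hp : ({p} : Finset α) ∈ K) (hv : ({v} : Finset α) ∈ K)
    (hvp : v ≠ p) :
    (Gr K V).Adj v (par K V p v) ∧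
      (Gr K V).dist p (par K V p v) + 1 = (Gr K V).dist p v := by
  have hr : (Gr K V).Reachable p v := vert_reachable hfin hK hconn hV hp hv
  have hex : ∃ u, (Gr K V).Adj v u ∧ (Gr K V).dist p u + 1 = (Gr K V).dist p v := by
    obtain ⟨wr, hwr⟩ := hr.symm.exists_walk_length_eq_dist
    cases wr with
    | nil => exact absurd rfl hvp
    | cons h w' =>
      rename_i u
      refine ⟨u, h, ?_⟩
      have hle1 : (Gr K V).dist p u ≤ w'.length := by
        have := SimpleGraph.dist_le w'.reverse
        rwa [SimpleGraph.Walk.length_reverse] at this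
      have hle2 : (Gr K V).dist p v ≤ (Gr K V).dist p u + 1 := by
        obtain ⟨w2, hw2⟩ := (hr.trans h.reachable).exists_walk_length_eq_dist
        have := SimpleGraph.dist_le (w2.concat h.symm)
        rwa [SimpleGraph.Walk.length_concat, hw2] at this
      have hlen : w'.length + 1 = (Gr K V).dist v p := by
        simpa using hwr
      rw [SimpleGraph.dist_comm] at hlen
      omega
  rw [par, dif_pos hex]
  exact hex.choose_spec


/-- The improved vector field: keep the pairs of `V` in dimensions `≥ 1`, and match
every vertex other than `p` with the edge towards its parent in a BFS tree. -/
def Wfield (K : Set (Finset α)) (V : Set (Finset α × Finset α)) (p : α) :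
    Set (Finset α × Finset α) :=
  {q | q ∈ V ∧ 2 ≤ q.1.card} ∪
  {q | ∃ v : α, ({v} : Finset α) ∈ K ∧ v ≠ p ∧
      q = (({v} : Finset α), ({v, par K V p v} : Finset α))}

open Classical in
noncomputable def FW1 (V : Set (Finset α × Finset α)) (x : Finset α) : ℕ :=
  if x.card = 1 ∨ (x.card = 2 ∧ ∀ t, (x, t) ∉ V) then 0 else 1

open Classical in
noncomputable def FW2 (K : Set (Finset α)) (V : Set (Finset α × Finset α)) (p : α)
    (x : Finset α) : ℕ :=
  if x.card = 1 then x.sup (fun v => (Gr K V).dist p v)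
  else if x.card = 2 ∧ ∀ t, (x, t) ∉ V then
    (if ∃ v : α, ({v} : Finset α) ∈ K ∧ v ≠ p ∧ x = ({v, par K V p v} : Finset α)
      then x.sup (fun v => (Gr K V).dist p v)
      else x.sup (fun v => (Gr K V).dist p v) + 1)
  else FV K V x

theorem step_dec (hfin : K.Finite) (hK : IsComplex K) (hconn : ComplexConnected K)
    (hV : IsDGVF K V) {p : α} (hp : ({p} : Finset α) ∈ K) :
    ∀ x y, VStep K (Wfield K V p) x y →
      FW1 V y < FW1 V x ∨ (FW1 V y = FW1 V x ∧
        (FW2 K V p y < FW2 K V p x ∨ (FW2 K V p y = FW2 K V p x ∧ x.card < y.card))) := by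
  intro x y hstep
  rcases hstep with ⟨hxK, hyK, hf, hnW⟩ | hW
  · -- down step
    have hc : x.card = y.card + 1 := hf.2
    have hy1 : 1 ≤ y.card := Finset.card_pos.mpr (hK.1 y hyK)
    rcases (show y.card = 1 ∨ y.card = 2 ∨ 3 ≤ y.card by omega) with h1 | h2 | h3
    · -- y is a vertex, x an edge
      have hF1y : FW1 V y = 0 := if_pos (Or.inl h1)
      by_cases hxm : ∀ t, (x, t) ∉ V
      · have hF1x : FW1 V x = 0 := if_pos (Or.inr ⟨by omega, hxm⟩)
        right
        refine ⟨by omega, Or.inl ?_⟩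
        rw [FW2, if_pos h1, FW2, if_neg (by omega), if_pos ⟨by omega, hxm⟩]
        by_cases htree : ∃ v : α, ({v} : Finset α) ∈ K ∧ v ≠ p ∧
            x = ({v, par K V p v} : Finset α)
        · rw [if_pos htree]
          obtain ⟨v, hvK, hvp, hxv⟩ := htree
          obtain ⟨a, ha⟩ := Finset.card_eq_one.mp h1
          have hax : a ∈ x := hf.1 (by rw [ha]; simp)
          have hav : a = v ∨ a = par K V p v := by rw [hxv] at hax; simpa using hax
          have hanv : a ≠ v := by
            rintro rfl
            exact hnW (Or.inr ⟨a, hvK, hvp, by rw [ha, hxv]⟩)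
          have hap : a = par K V p v := hav.resolve_left hanv
          have hps := par_spec hfin hK hconn hV hp hvK hvp
          have hdlt : (Gr K V).dist p (par K V p v) + 1 = (Gr K V).dist p v := hps.2
          rw [ha, hxv, Finset.sup_singleton, Finset.sup_insert, Finset.sup_singleton,
            sup_eq_left.mpr (by omega : (Gr K V).dist p (par K V p v) ≤ (Gr K V).dist p v),
            hap]
          omega
        · rw [if_neg htree]
          have hle : y.sup (fun v => (Gr K V).dist p v) ≤
              x.sup (fun v => (Gr K V).dist p v) := Finset.sup_mono hf.1
          omega
      · have hF1x : FW1 V x = 1 := by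
          rw [FW1, if_neg]
          rintro (h | h)
          · omega
          · exact hxm h.2
        left; omega
    · -- y an edge, x a 2-simplex
      by_cases hym : ∀ t, (y, t) ∉ V
      · have hF1y : FW1 V y = 0 := if_pos (Or.inr ⟨h2, hym⟩)
        have hF1x : FW1 V x = 1 := by
          rw [FW1, if_neg]
          rintro (h | h) <;> omega
        left; omega
      · have hF1y : FW1 V y = 1 := by
          rw [FW1, if_neg]
          rintro (h | h)
          · omega
          · exact hym h.2
        have hF1x : FW1 V x = 1 := by
          rw [FW1, if_neg]
          rintro (h | h) <;> omega
        right
        refine ⟨by omega, Or.inl ?_⟩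
        have h2le : 2 ≤ y.card := by omega
        have hnV : (y, x) ∉ V := fun h => hnW (Or.inl ⟨h, h2le⟩)
        rw [FW2, if_neg (by omega), if_neg (fun hcon => hym hcon.2),
          FW2, if_neg (by omega), if_neg (by rintro ⟨h, -⟩; omega)]
        exact FV_lt hfin hV hxK hyK hf hnV
    · -- both of dimension at least 2
      have hF1y : FW1 V y = 1 := by
        rw [FW1, if_neg]
        rintro (h | h)
        · omega
        · rcases h with ⟨h, -⟩; omega
      have hF1x : FW1 V x = 1 := by
        rw [FW1, if_neg]
        rintro (h | h)
        · omega
        · rcases h with ⟨h, -⟩; omega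
      right
      refine ⟨by omega, Or.inl ?_⟩
      have h2le : 2 ≤ y.card := by omega
      have hnV : (y, x) ∉ V := fun h => hnW (Or.inl ⟨h, h2le⟩)
      rw [FW2, if_neg (by omega), if_neg (by rintro ⟨h, -⟩; omega),
        FW2, if_neg (by omega), if_neg (by rintro ⟨h, -⟩; omega)]
      exact FV_lt hfin hV hxK hyK hf hnV
  · -- up step
    rcases hW with ⟨hqV, hq2⟩ | ⟨v, hvK, hvp, hq⟩
    · have hfac := (hV.1 _ hqV).2.2
      have hc : y.card = x.card + 1 := hfac.2
      have hq2' : 2 ≤ x.card := hq2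
      have hxm : ¬ ∀ t, (x, t) ∉ V := fun h => h y hqV
      have hF1x : FW1 V x = 1 := by
        rw [FW1, if_neg]
        rintro (h | h)
        · omega
        · exact hxm h.2
      have hF1y : FW1 V y = 1 := by
        rw [FW1, if_neg]
        rintro (h | h)
        · omega
        · rcases h with ⟨h, -⟩; omega
      right
      refine ⟨by omega, Or.inr ⟨?_, by omega⟩⟩
      rw [FW2, if_neg (by omega), if_neg (by rintro ⟨h, -⟩; omega),
        FW2, if_neg (by omega), if_neg (fun hcon => hxm hcon.2)]
      exact (FV_pair hV hqV).symm
    · have hps := par_spec hfin hK hconn hV hp hvK hvp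
      have hadj : (Gr K V).Adj v (par K V p v) := hps.1
      have hne : v ≠ par K V p v := hadj.1
      have hx : x = ({v} : Finset α) := congrArg Prod.fst hq
      have hy : y = ({v, par K V p v} : Finset α) := congrArg Prod.snd hq
      subst hx; subst hy
      have hcy : ({v, par K V p v} : Finset α).card = 2 := Finset.card_pair hne
      have hF1x : FW1 V ({v} : Finset α) = 0 := if_pos (Or.inl (Finset.card_singleton v))
      have hF1y : FW1 V ({v, par K V p v} : Finset α) = 0 :=
        if_pos (Or.inr ⟨hcy, hadj.2.2⟩)
      right
      refine ⟨by omega, Or.inr ⟨?_, ?_⟩⟩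
      · rw [FW2, if_neg (by omega), if_pos ⟨hcy, hadj.2.2⟩,
          if_pos ⟨v, hvK, hvp, rfl⟩, FW2, if_pos (Finset.card_singleton v)]
        rw [Finset.sup_insert, Finset.sup_singleton, Finset.sup_singleton,
          sup_eq_left.mpr (by omega : (Gr K V).dist p (par K V p v) ≤ (Gr K V).dist p v)]
      · rw [Finset.card_singleton, hcy]
        omega

theorem W_dgvf (hfin : K.Finite) (hK : IsComplex K) (hconn : ComplexConnected K)
    (hV : IsDGVF K V) {p : α} (hp : ({p} : Finset α) ∈ K) :
    IsDGVF K (Wfield K V p) := by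
  refine ⟨?_, ?_, ?_⟩
  · rintro q (⟨hqV, -⟩ | ⟨v, hvK, hvp, rfl⟩)
    · exact hV.1 _ hqV
    · have hps := par_spec hfin hK hconn hV hp hvK hvp
      have hne : v ≠ par K V p v := hps.1.1
      refine ⟨hvK, hps.1.2.1, ?_, ?_⟩
      · simp
      · rw [Finset.card_pair hne, Finset.card_singleton]
  · rintro q (⟨hqV, hq2⟩ | ⟨v, hvK, hvp, rfl⟩) q' (⟨hq'V, hq'2⟩ | ⟨w, hwK, hwp, rfl⟩) hshare
    · exact hV.2.1 _ hqV _ hq'V hshare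
    · exfalso
      have hps := par_spec hfin hK hconn hV hp hwK hwp
      have hne : w ≠ par K V p w := hps.1.1
      have hfac := (hV.1 _ hqV).2.2
      have hc2 : q.2.card = q.1.card + 1 := hfac.2
      rcases hshare with h | h | h | h
      · have h' : q.1 = ({w} : Finset α) := h
        rw [h', Finset.card_singleton] at hq2; omega
      · have h' : q.1 = ({w, par K V p w} : Finset α) := h
        exact hps.1.2.2 q.2 (by rw [← h', Prod.mk.eta]; exact hqV)
      · have h' : q.2 = ({w} : Finset α) := h
        rw [h', Finset.card_singleton] at hc2; omega
      · have h' : q.2 = ({w, par K V p w} : Finset α) := h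
        rw [h', Finset.card_pair hne] at hc2; omega
    · exfalso
      have hps := par_spec hfin hK hconn hV hp hvK hvp
      have hne : v ≠ par K V p v := hps.1.1
      have hfac := (hV.1 _ hq'V).2.2
      have hc2 : q'.2.card = q'.1.card + 1 := hfac.2
      rcases hshare with h | h | h | h
      · have h' : ({v} : Finset α) = q'.1 := h
        rw [← h', Finset.card_singleton] at hq'2; omega
      · have h' : ({v} : Finset α) = q'.2 := h
        rw [← h', Finset.card_singleton] at hc2; omega
      · have h' : ({v, par K V p v} : Finset α) = q'.1 := h
        exact hps.1.2.2 q'.2 (by rw [h', Prod.mk.eta]; exact hq'V)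
      · have h' : ({v, par K V p v} : Finset α) = q'.2 := h
        rw [← h', Finset.card_pair hne] at hc2
        omega
    · have hpsv := par_spec hfin hK hconn hV hp hvK hvp
      have hpsw := par_spec hfin hK hconn hV hp hwK hwp
      have hnev : v ≠ par K V p v := hpsv.1.1
      have hnew : w ≠ par K V p w := hpsw.1.1
      rcases hshare with h | h | h | h
      · simp only at h
        rw [Finset.singleton_inj] at h
        subst h; rfl
      · exfalso
        have := congrArg Finset.card h
        rw [Finset.card_singleton, Finset.card_pair hnew] at this; omega
      · exfalso
        have := congrArg Finset.card h
        rw [Finset.card_singleton, Finset.card_pair hnev] at this; omega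
      · simp only at h
        by_cases hvw : v = w
        · subst hvw; rfl
        · exfalso
          have hv2 : v ∈ ({w, par K V p w} : Finset α) := by
            rw [← h]; simp
          have hw2 : w ∈ ({v, par K V p v} : Finset α) := by
            rw [h]; simp
          have hv3 : v = par K V p w := by
            rcases Finset.mem_insert.mp hv2 with h' | h'
            · exact absurd h' hvw
            · exact Finset.mem_singleton.mp h'
          have hw3 : w = par K V p v := by
            rcases Finset.mem_insert.mp hw2 with h' | h'
            · exact absurd h'.symm hvw
            · exact Finset.mem_singleton.mp h'
          have h1 := hpsv.2
          have h2 := hpsw.2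
          rw [← hv3] at h2
          rw [← hw3] at h1
          omega
  · intro σ hcyc
    have hdec : ∀ x y, Relation.TransGen (VStep K (Wfield K V p)) x y →
        FW1 V y < FW1 V x ∨ (FW1 V y = FW1 V x ∧
          (FW2 K V p y < FW2 K V p x ∨ (FW2 K V p y = FW2 K V p x ∧ x.card < y.card))) := by
      intro x y h
      induction h with
      | single h => exact step_dec hfin hK hconn hV hp _ _ h
      | tail _ h ih =>
        have h2 := step_dec hfin hK hconn hV hp _ _ h
        omega
    have := hdec σ σ hcyc
    omega


def GEdges (K : Set (Finset α)) (V : Set (Finset α × Finset α)) : Set (Finset α) :=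
  {e | e ∈ K ∧ e.card = 2 ∧ ∀ t, (e, t) ∉ V}

def FEdges (V : Set (Finset α × Finset α)) : Set (Finset α) :=
  {e | ∃ q ∈ V, q.1.card = 1 ∧ q.2 = e}

noncomputable def TreeEdges (K : Set (Finset α)) (V : Set (Finset α × Finset α))
    (p : α) : Set (Finset α) :=
  (fun v => ({v, par K V p v} : Finset α)) '' {v | ({v} : Finset α) ∈ K ∧ v ≠ p}

theorem crit1_W (hfin : K.Finite) (hK : IsComplex K) (hconn : ComplexConnected K)
    (hV : IsDGVF K V) {p : α} (hp : ({p} : Finset α) ∈ K) :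
    {σ : Finset α | IsCritical K (Wfield K V p) σ ∧ σ.card = 1} =
      ({({p} : Finset α)} : Set (Finset α)) := by
  ext σ
  simp only [Set.mem_setOf_eq, Set.mem_singleton_iff]
  constructor
  · rintro ⟨⟨hσK, hcrit⟩, hc1⟩
    obtain ⟨v, rfl⟩ := Finset.card_eq_one.mp hc1
    by_cases hvp : v = p
    · rw [hvp]
    · exact absurd rfl (hcrit (({v} : Finset α), ({v, par K V p v} : Finset α))
        (Or.inr ⟨v, hσK, hvp, rfl⟩)).1
  · rintro rfl
    refine ⟨⟨hp, ?_⟩, Finset.card_singleton p⟩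
    rintro q (⟨hqV, hq2⟩ | ⟨v, hvK, hvp, rfl⟩)
    · constructor
      · intro h
        rw [← h, Finset.card_singleton] at hq2; omega
      · intro h
        have hc := (hV.1 _ hqV).2.2.2
        rw [← h, Finset.card_singleton] at hc; omega
    · have hne : v ≠ par K V p v := (par_spec hfin hK hconn hV hp hvK hvp).1.1
      constructor
      · intro h
        have h' : ({p} : Finset α) = ({v} : Finset α) := h
        exact hvp (Finset.singleton_inj.mp h').symm
      · intro h
        have h' : ({p} : Finset α) = ({v, par K V p v} : Finset α) := h
        have := congrArg Finset.card h'
        rw [Finset.card_singleton, Finset.card_pair hne] at this; omega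

theorem crit2_W (hfin : K.Finite) (hK : IsComplex K) (hconn : ComplexConnected K)
    (hV : IsDGVF K V) {p : α} (hp : ({p} : Finset α) ∈ K) :
    {σ : Finset α | IsCritical K (Wfield K V p) σ ∧ σ.card = 2} =
      GEdges K V \ TreeEdges K V p := by
  ext e
  simp only [Set.mem_setOf_eq, Set.mem_diff]
  constructor
  · rintro ⟨⟨heK, hcrit⟩, hc2⟩
    refine ⟨⟨heK, hc2, ?_⟩, ?_⟩
    · intro t ht
      exact (hcrit (e, t) (Or.inl ⟨ht, show (2:ℕ) ≤ e.card by omega⟩)).1 rfl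
    · rintro ⟨v, ⟨hvK, hvp⟩, rfl⟩
      exact (hcrit (({v} : Finset α), ({v, par K V p v} : Finset α))
        (Or.inr ⟨v, hvK, hvp, rfl⟩)).2 rfl
  · rintro ⟨⟨heK, hc2, hnm⟩, hnT⟩
    refine ⟨⟨heK, ?_⟩, hc2⟩
    rintro q (⟨hqV, hq2⟩ | ⟨v, hvK, hvp, rfl⟩)
    · constructor
      · intro h
        exact hnm q.2 (by rw [h, Prod.mk.eta]; exact hqV)
      · intro h
        have hc := (hV.1 _ hqV).2.2.2
        rw [← h, hc2] at hc; omega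
    · have hne : v ≠ par K V p v := (par_spec hfin hK hconn hV hp hvK hvp).1.1
      constructor
      · intro h
        have h' : e = ({v} : Finset α) := h
        rw [h', Finset.card_singleton] at hc2; omega
      · intro h
        exact hnT ⟨v, ⟨hvK, hvp⟩, (show e = ({v, par K V p v} : Finset α) from h).symm⟩
  
theorem crit3_W (hfin : K.Finite) (hK : IsComplex K) (hconn : ComplexConnected K)
    (hV : IsDGVF K V) {p : α} (hp : ({p} : Finset α) ∈ K) :
    {σ : Finset α | IsCritical K (Wfield K V p) σ ∧ 3 ≤ σ.card} =
      {σ : Finset α | IsCritical K V σ ∧ 3 ≤ σ.card} := by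
  ext σ
  simp only [Set.mem_setOf_eq]
  constructor
  · rintro ⟨⟨hσK, hcrit⟩, h3⟩
    refine ⟨⟨hσK, ?_⟩, h3⟩
    intro q hqV
    by_cases h2 : 2 ≤ q.1.card
    · exact hcrit q (Or.inl ⟨hqV, h2⟩)
    · have hq1 : q.1.card = 1 := by
        have := Finset.card_pos.mpr (hK.1 _ (hV.1 _ hqV).1)
        omega
      have hq2c : q.2.card = 2 := by
        have := (hV.1 _ hqV).2.2.2; omega
      constructor
      · intro h; rw [h, hq1] at h3; omega
      · intro h; rw [h, hq2c] at h3; omega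
  · rintro ⟨⟨hσK, hcrit⟩, h3⟩
    refine ⟨⟨hσK, ?_⟩, h3⟩
    rintro q (⟨hqV, hq2⟩ | ⟨v, hvK, hvp, rfl⟩)
    · exact hcrit q hqV
    · have hne : v ≠ par K V p v := (par_spec hfin hK hconn hV hp hvK hvp).1.1
      constructor
      · intro h
        have h' : σ = ({v} : Finset α) := h
        rw [h', Finset.card_singleton] at h3; omega
      · intro h
        have h' : σ = ({v, par K V p v} : Finset α) := h
        rw [h', Finset.card_pair hne] at h3; omega

theorem crit2_V (hV : IsDGVF K V) :
    {σ : Finset α | IsCritical K V σ ∧ σ.card = 2} = GEdges K V \ FEdges V := by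
  ext e
  simp only [Set.mem_setOf_eq, Set.mem_diff]
  constructor
  · rintro ⟨⟨heK, hcrit⟩, hc2⟩
    refine ⟨⟨heK, hc2, ?_⟩, ?_⟩
    · intro t ht
      exact (hcrit (e, t) ht).1 rfl
    · rintro ⟨q, hqV, -, hqe⟩
      exact (hcrit q hqV).2 hqe.symm
  · rintro ⟨⟨heK, hc2, hnm⟩, hnF⟩
    refine ⟨⟨heK, ?_⟩, hc2⟩
    intro q hqV
    constructor
    · intro h
      exact hnm q.2 (by rw [h, Prod.mk.eta]; exact hqV)
    · intro h
      have hc := (hV.1 _ hqV).2.2.2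
      rw [h] at hc2
      exact hnF ⟨q, hqV, by omega, h.symm⟩

theorem tree_inj (hfin : K.Finite) (hK : IsComplex K) (hconn : ComplexConnected K)
    (hV : IsDGVF K V) {p : α} (hp : ({p} : Finset α) ∈ K) :
    Set.InjOn (fun v => ({v, par K V p v} : Finset α))
      {v : α | ({v} : Finset α) ∈ K ∧ v ≠ p} := by
  rintro v ⟨hvK, hvp⟩ w ⟨hwK, hwp⟩ h
  by_cases hvw : v = w
  · exact hvw
  exfalso
  simp only at h
  have hpsv := par_spec hfin hK hconn hV hp hvK hvp
  have hpsw := par_spec hfin hK hconn hV hp hwK hwp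
  have hv2 : v ∈ ({w, par K V p w} : Finset α) := by rw [← h]; simp
  have hw2 : w ∈ ({v, par K V p v} : Finset α) := by rw [h]; simp
  have hv3 : v = par K V p w := by
    rcases Finset.mem_insert.mp hv2 with h' | h'
    · exact absurd h' hvw
    · exact Finset.mem_singleton.mp h'
  have hw3 : w = par K V p v := by
    rcases Finset.mem_insert.mp hw2 with h' | h'
    · exact absurd h'.symm hvw
    · exact Finset.mem_singleton.mp h'
  have h1 := hpsv.2
  have h2 := hpsw.2
  rw [← hv3] at h2
  rw [← hw3] at h1
  omega

theorem tree_sub (hfin : K.Finite) (hK : IsComplex K) (hconn : ComplexConnected K)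
    (hV : IsDGVF K V) {p : α} (hp : ({p} : Finset α) ∈ K) :
    TreeEdges K V p ⊆ GEdges K V := by
  rintro e ⟨v, ⟨hvK, hvp⟩, rfl⟩
  have hps := par_spec hfin hK hconn hV hp hvK hvp
  exact ⟨hps.1.2.1, Finset.card_pair hps.1.1, hps.1.2.2⟩

theorem fe_sub (hK : IsComplex K) (hV : IsDGVF K V) : FEdges V ⊆ GEdges K V := by
  rintro e ⟨q, hqV, hq1, rfl⟩
  refine ⟨(hV.1 _ hqV).2.1, by have := (hV.1 _ hqV).2.2.2; omega, ?_⟩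
  intro t ht
  have := hV.2.1 _ hqV _ ht (Or.inr (Or.inr (Or.inl rfl)))
  have h1 : q.1 = q.2 := by
    conv_lhs => rw [this]
  have hc := (hV.1 _ hqV).2.2.2
  rw [h1] at hc; omega

theorem fe_inj (hV : IsDGVF K V) : Set.InjOn (rep V) (FEdges V) := by
  rintro e ⟨q, hqV, -, hqe⟩ e' ⟨q', hq'V, -, hq'e⟩ h
  rw [← hqe, ← hq'e, rep_snd hV hqV, rep_snd hV hq'V] at h
  rw [← hqe, ← hq'e, hV.2.1 _ hqV _ hq'V (Or.inl h)]

theorem fe_image (hV : IsDGVF K V) :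
    rep V '' FEdges V = {σ : Finset α | σ ∈ K ∧ σ.card = 1 ∧ ∃ q ∈ V, q.1 = σ} := by
  ext σ
  simp only [Set.mem_image, Set.mem_setOf_eq]
  constructor
  · rintro ⟨e, ⟨q, hqV, hq1, hqe⟩, rfl⟩
    rw [← hqe, rep_snd hV hqV]
    exact ⟨(hV.1 _ hqV).1, hq1, q, hqV, rfl⟩
  · rintro ⟨hσK, hc1, q, hqV, hq1⟩
    refine ⟨q.2, ⟨q, hqV, by rw [hq1]; exact hc1, rfl⟩, ?_⟩
    rw [rep_snd hV hqV, hq1]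

end Stmt0Aux
/-- a connected complex admits a gradient with `p` as the only critical
vertex and `m - 2(m₀ - 1)` critical simplices in total. -/
theorem stmt0 {α : Type*} [DecidableEq α] (K : Set (Finset α)) (hfin : K.Finite) (hK : IsComplex K)
    (hconn : ComplexConnected K) (p : α) (hp : ({p} : Finset α) ∈ K)
    (V : Set (Finset α × Finset α)) (hV : IsDGVF K V) (m₀ m : ℕ)
    (hm₀ : m₀ = {σ : Finset α | IsCritical K V σ ∧ σ.card = 1}.ncard)
    (hm : m = criticalCount K V) (h1 : 1 < m₀) :
    ∃ W : Set (Finset α × Finset α), IsDGVF K W ∧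
      {σ : Finset α | IsCritical K W σ ∧ σ.card = 1} =
        ({({p} : Finset α)} : Set (Finset α)) ∧
      (criticalCount K W : ℤ) = (m : ℤ) - 2 * ((m₀ : ℤ) - 1) := by
  classical
  refine ⟨Wfield K V p, W_dgvf hfin hK hconn hV hp, crit1_W hfin hK hconn hV hp, ?_⟩
  -- basic finiteness
  set Vx : Set α := {v | ({v} : Finset α) ∈ K} with hVxdef
  have hsinj : Set.InjOn (fun v : α => ({v} : Finset α)) Vx :=
    fun a _ b _ h => Finset.singleton_inj.mp h
  have hVxfin : Vx.Finite := by
    refine Set.Finite.of_finite_image (hfin.subset ?_) hsinj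
    rintro σ ⟨v, hv, rfl⟩
    exact hv
  have hGEfin : (GEdges K V).Finite := hfin.subset (fun e he => he.1)
  have hTpsub := tree_sub hfin hK hconn hV hp
  have hFEsub := fe_sub hK hV
  have hTpfin : (TreeEdges K V p).Finite := hGEfin.subset hTpsub
  have hFEfin : (FEdges V).Finite := hGEfin.subset hFEsub
  -- tree edge count
  have hTp : (TreeEdges K V p).ncard = (Vx \ {p}).ncard := by
    have hset : {v : α | ({v} : Finset α) ∈ K ∧ v ≠ p} = Vx \ {p} := by
      ext v
      simp [hVxdef, Set.mem_diff, and_comm]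
    rw [TreeEdges, hset, Set.ncard_image_of_injOn (hset ▸ tree_inj hfin hK hconn hV hp)]
  have hVxp : (Vx \ {p}).ncard + 1 = Vx.ncard :=
    Set.ncard_diff_singleton_add_one (show p ∈ Vx from hp) hVxfin
  -- vertex counts
  set S1 : Set (Finset α) := {σ | σ ∈ K ∧ σ.card = 1} with hS1def
  have hS1 : S1 = (fun v : α => ({v} : Finset α)) '' Vx := by
    ext σ
    constructor
    · rintro ⟨hσK, hc⟩
      obtain ⟨v, rfl⟩ := Finset.card_eq_one.mp hc
      exact ⟨v, hσK, rfl⟩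
    · rintro ⟨v, hv, rfl⟩
      exact ⟨hv, Finset.card_singleton v⟩
  have hVxS1 : Vx.ncard = S1.ncard := by
    rw [hS1, Set.ncard_image_of_injOn hsinj]
  set C1 : Set (Finset α) := {σ : Finset α | IsCritical K V σ ∧ σ.card = 1} with hC1def
  set MS1 : Set (Finset α) := {σ : Finset α | σ ∈ K ∧ σ.card = 1 ∧ ∃ q ∈ V, q.1 = σ}
    with hMS1def
  have hsplit : S1 = C1 ∪ MS1 := by
    ext σ
    constructor
    · rintro ⟨hσK, hc⟩
      by_cases hcrit : ∀ q ∈ V, σ ≠ q.1 ∧ σ ≠ q.2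
      · exact Or.inl ⟨⟨hσK, hcrit⟩, hc⟩
      · push_neg at hcrit
        obtain ⟨q, hqV, hq⟩ := hcrit
        by_cases hq1 : σ = q.1
        · exact Or.inr ⟨hσK, hc, q, hqV, hq1.symm⟩
        · exfalso
          have h2 := hq hq1
          have hpos := Finset.card_pos.mpr (hK.1 _ (hV.1 _ hqV).1)
          have hcc := (hV.1 _ hqV).2.2.2
          rw [h2] at hc
          omega
    · rintro (⟨⟨hσK, -⟩, hc⟩ | ⟨hσK, hc, -⟩) <;> exact ⟨hσK, hc⟩
  have hdisj : Disjoint C1 MS1 := by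
    rw [Set.disjoint_left]
    rintro σ ⟨⟨-, hcrit⟩, -⟩ ⟨-, -, q, hqV, hq1⟩
    exact (hcrit q hqV).1 hq1.symm
  have hC1fin : C1.Finite := hfin.subset (fun σ h => h.1.1)
  have hMS1fin : MS1.Finite := hfin.subset (fun σ h => h.1)
  have hsum : S1.ncard = C1.ncard + MS1.ncard := by
    rw [hsplit, Set.ncard_union_eq hdisj hC1fin hMS1fin]
  have hMS1 : MS1.ncard = (FEdges V).ncard := by
    rw [hMS1def, ← fe_image hV, Set.ncard_image_of_injOn (fe_inj hV)]
  -- decomposition of critical counts by dimension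
  have hcount : ∀ U : Set (Finset α × Finset α),
      criticalCount K U = {σ : Finset α | IsCritical K U σ ∧ σ.card = 1}.ncard +
        {σ : Finset α | IsCritical K U σ ∧ σ.card = 2}.ncard +
        {σ : Finset α | IsCritical K U σ ∧ 3 ≤ σ.card}.ncard := by
    intro U
    have hdecomp : {σ : Finset α | IsCritical K U σ} =
        ({σ : Finset α | IsCritical K U σ ∧ σ.card = 1} ∪
          {σ : Finset α | IsCritical K U σ ∧ σ.card = 2}) ∪
          {σ : Finset α | IsCritical K U σ ∧ 3 ≤ σ.card} := by
      ext σ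
      simp only [Set.mem_union, Set.mem_setOf_eq]
      constructor
      · intro h
        have hc1 : 1 ≤ σ.card := Finset.card_pos.mpr (hK.1 _ h.1)
        rcases (show σ.card = 1 ∨ σ.card = 2 ∨ 3 ≤ σ.card by omega) with hh | hh | hh
        · exact Or.inl (Or.inl ⟨h, hh⟩)
        · exact Or.inl (Or.inr ⟨h, hh⟩)
        · exact Or.inr ⟨h, hh⟩
      · rintro ((⟨h, -⟩ | ⟨h, -⟩) | ⟨h, -⟩) <;> exact h
    have hf1 : {σ : Finset α | IsCritical K U σ ∧ σ.card = 1}.Finite :=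
      hfin.subset (fun σ h => h.1.1)
    have hf2 : {σ : Finset α | IsCritical K U σ ∧ σ.card = 2}.Finite :=
      hfin.subset (fun σ h => h.1.1)
    have hf3 : {σ : Finset α | IsCritical K U σ ∧ 3 ≤ σ.card}.Finite :=
      hfin.subset (fun σ h => h.1.1)
    have hd12 : Disjoint {σ : Finset α | IsCritical K U σ ∧ σ.card = 1}
        {σ : Finset α | IsCritical K U σ ∧ σ.card = 2} := by
      rw [Set.disjoint_left]
      rintro σ ⟨-, h⟩ ⟨-, h'⟩
      omega
    have hd3 : Disjoint ({σ : Finset α | IsCritical K U σ ∧ σ.card = 1} ∪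
        {σ : Finset α | IsCritical K U σ ∧ σ.card = 2})
        {σ : Finset α | IsCritical K U σ ∧ 3 ≤ σ.card} := by
      rw [Set.disjoint_left]
      rintro σ (⟨-, h⟩ | ⟨-, h⟩) ⟨-, h'⟩ <;> omega
    rw [criticalCount, hdecomp, Set.ncard_union_eq hd3 (hf1.union hf2) hf3,
      Set.ncard_union_eq hd12 hf1 hf2]
  -- evaluate both counts
  have hcw : criticalCount K (Wfield K V p) =
      1 + ((GEdges K V).ncard - (TreeEdges K V p).ncard) +
        {σ : Finset α | IsCritical K V σ ∧ 3 ≤ σ.card}.ncard := by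
    rw [hcount (Wfield K V p), crit1_W hfin hK hconn hV hp, crit2_W hfin hK hconn hV hp,
      crit3_W hfin hK hconn hV hp, Set.ncard_singleton, Set.ncard_diff hTpsub hTpfin]
  have hcv : criticalCount K V =
      C1.ncard + ((GEdges K V).ncard - (FEdges V).ncard) +
        {σ : Finset α | IsCritical K V σ ∧ 3 ≤ σ.card}.ncard := by
    rw [hcount V, ← hC1def, crit2_V hV, Set.ncard_diff hFEsub hFEfin]
  have hle1 : (TreeEdges K V p).ncard ≤ (GEdges K V).ncard :=
    Set.ncard_le_ncard hTpsub hGEfin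
  have hle2 : (FEdges V).ncard ≤ (GEdges K V).ncard :=
    Set.ncard_le_ncard hFEsub hGEfin
  rw [hm₀] at h1
  omega


end MorseApprox
end

section
/- Given a collapsible connected finite abstract simplicial complex K and an arbitrary vertex p of K, there exists a discrete gradient vector field V on K whose unique critical simplex is p. -/
namespace MorseApprox

variable {α : Type*}

section Aux

variable {α : Type*}

/-- Every simplex of a finite complex is contained in a maximal simplex. -/
lemma exists_maxface {K : Set (Finset α)} (hfin : K.Finite) {ρ : Finset α} (hρ : ρ ∈ K) :
    ∃ m, IsMaximalFace K m ∧ ρ ⊆ m := by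
  obtain ⟨m, hm, hmax⟩ := Set.Finite.exists_maximalFor Finset.card {x ∈ K | ρ ⊆ x}
    (hfin.subset (fun x hx => hx.1)) ⟨ρ, hρ, subset_rfl⟩
  refine ⟨m, ⟨hm.1, fun x hxK hmx => ?_⟩, hm.2⟩
  have hx : x ∈ {x ∈ K | ρ ⊆ x} := ⟨hxK, hm.2.trans hmx⟩
  exact (Finset.eq_of_subset_of_card_le hmx
    (hmax hx (Finset.card_le_card hmx))).symm

/-- The empty matching is acyclic. -/
lemma empty_acyclic (K : Set (Finset α)) :
    ∀ σ : Finset α, ¬ Relation.TransGen (VStep K (∅ : Set (Finset α × Finset α))) σ σ := by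
  have key : ∀ a b : Finset α, Relation.TransGen (VStep K ∅) a b → b.card < a.card := by
    intro a b h
    induction h with
    | single h =>
      rcases h with ⟨_, _, hf, _⟩ | h
      · have := hf.2; omega
      · exact absurd h (Set.notMem_empty _)
    | tail _ h ih =>
      rcases h with ⟨_, _, hf, _⟩ | h
      · have := hf.2; omega
      · exact absurd h (Set.notMem_empty _)
  intro σ h
  exact lt_irrefl _ (key _ _ h)

/-- From a collapsing sequence onto a single vertex, one obtains a discrete gradient
vector field whose unique critical simplex is that vertex. -/
lemma grad (q : α) (K : Set (Finset α))
    (hc : Collapses K ({({q} : Finset α)} : Set (Finset α))) :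
    K.Finite → IsComplex K →
    ∃ V, IsDGVF K V ∧
      {σ : Finset α | IsCritical K V σ} = ({({q} : Finset α)} : Set (Finset α)) := by
  induction hc using Relation.ReflTransGen.head_induction_on with
  | refl =>
    intro hfin hK
    refine ⟨∅, ⟨fun r hr => absurd hr (Set.notMem_empty _),
      fun r hr => absurd hr (Set.notMem_empty _), empty_acyclic _⟩, ?_⟩
    ext ρ
    simp [IsCritical]
  | @head K1 K2 hstep hrest ih =>
    intro hfin hK
    obtain ⟨σ, τ, hfree, hmax, hστ, hcard, hK2⟩ := hstep
    have hσK : σ ∈ K1 := hfree.1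
    have hτK : τ ∈ K1 := hmax.1
    have huniq : ∀ ρ, IsMaximalFace K1 ρ → σ ⊆ ρ → ρ = τ := by
      obtain ⟨t, ht, htu⟩ := hfree.2.2
      intro ρ h1 h2
      exact (htu ρ ⟨h1, h2⟩).trans (htu τ ⟨hmax, hστ⟩).symm
    have hστne : σ ≠ τ := fun h => by rw [h] at hcard; omega
    have hσK2 : σ ∉ K2 := by rw [hK2]; intro h; exact h.2 (Or.inl rfl)
    have hτK2 : τ ∉ K2 := by rw [hK2]; intro h; exact h.2 (Or.inr rfl)
    have hsub : K2 ⊆ K1 := by rw [hK2]; exact Set.diff_subset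
    have hfin2 : K2.Finite := hfin.subset hsub
    have hcplx2 : IsComplex K2 := by
      constructor
      · exact fun ρ hρ => hK.1 ρ (hsub hρ)
      · intro ρ hρ ρ' hss hne
        have hρ'K : ρ' ∈ K1 := hK.2 ρ (hsub hρ) ρ' hss hne
        rw [hK2]
        refine ⟨hρ'K, ?_⟩
        rintro (h1 | h1)
        · -- ρ' = σ : σ ⊆ ρ forces ρ ∈ {σ, τ}, contradiction
          have hσρ : σ ⊆ ρ := h1 ▸ hss
          obtain ⟨m, hm, hρm⟩ := exists_maxface hfin (hsub hρ)
          have hmτ : m = τ := huniq m hm (hσρ.trans hρm)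
          have hρτ : ρ ⊆ τ := hmτ ▸ hρm
          have hc1 := Finset.card_le_card hσρ
          have hc2 := Finset.card_le_card hρτ
          have : ρ.card = σ.card ∨ ρ.card = τ.card := by omega
          rcases this with h | h
          · exact hσK2 ((Finset.eq_of_subset_of_card_le hσρ h.le).symm ▸ hρ)
          · exact hτK2 ((Finset.eq_of_subset_of_card_le hρτ h.ge) ▸ hρ)
        · -- ρ' = τ : τ ⊆ ρ forces ρ = τ
          have hτρ : τ ⊆ ρ := h1 ▸ hss
          exact hτK2 ((hmax.2 ρ (hsub hρ) hτρ) ▸ hρ)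
    obtain ⟨W, hW, hWcrit⟩ := ih hfin2 hcplx2
    set V : Set (Finset α × Finset α) := insert (σ, τ) W with hV
    have hWV : W ⊆ V := Set.subset_insert _ _
    have hστV : (σ, τ) ∈ V := Set.mem_insert _ _
    have hWmem := hW.1
    -- condition 1
    have cond1 : ∀ r ∈ V, r.1 ∈ K1 ∧ r.2 ∈ K1 ∧ IsFacet r.1 r.2 := by
      intro r hr
      rcases Set.mem_insert_iff.mp hr with rfl | hrW
      · exact ⟨hσK, hτK, hστ, hcard⟩
      · obtain ⟨h1, h2, h3⟩ := hWmem r hrW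
        exact ⟨hsub h1, hsub h2, h3⟩
    -- condition 2
    have cond2 : ∀ r ∈ V, ∀ s ∈ V,
        (r.1 = s.1 ∨ r.1 = s.2 ∨ r.2 = s.1 ∨ r.2 = s.2) → r = s := by
      intro r hr s hs hsh
      rcases Set.mem_insert_iff.mp hr with rfl | hrW
      · rcases Set.mem_insert_iff.mp hs with rfl | hsW
        · rfl
        · exfalso
          obtain ⟨h1, h2, -⟩ := hWmem s hsW
          dsimp only at hsh
          rcases hsh with h | h | h | h
          · exact hσK2 (h ▸ h1)
          · exact hσK2 (h ▸ h2)
          · exact hτK2 (h ▸ h1)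
          · exact hτK2 (h ▸ h2)
      · rcases Set.mem_insert_iff.mp hs with rfl | hsW
        · exfalso
          obtain ⟨h1, h2, -⟩ := hWmem r hrW
          dsimp only at hsh
          rcases hsh with h | h | h | h
          · exact hσK2 (h ▸ h1)
          · exact hτK2 (h ▸ h1)
          · exact hσK2 (h ▸ h2)
          · exact hτK2 (h ▸ h2)
        · exact hW.2.1 r hrW s hsW hsh
    -- no edges into σ
    have hinσ : ∀ x, ¬ VStep K1 V x σ := by
      rintro x (⟨hxK, hσK', hf, hnot⟩ | hx)
      · obtain ⟨m, hm, hxm⟩ := exists_maxface hfin hxK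
        have hmτ : m = τ := huniq m hm (hf.1.trans hxm)
        have hxτsub : x ⊆ τ := hmτ ▸ hxm
        have hfc := hf.2
        have hxτ : x = τ := by
          refine Finset.eq_of_subset_of_card_le hxτsub ?_
          omega
        exact hnot (hxτ ▸ hστV)
      · rcases Set.mem_insert_iff.mp hx with h | h
        · exact hστne (congrArg Prod.snd h)
        · exact hσK2 ((hWmem _ h).2.1)
    -- edges into τ come only from σ
    have hinτ : ∀ x, VStep K1 V x τ → x = σ := by
      rintro x (⟨hxK, hτK', hf, hnot⟩ | hx)
      · exfalso
        have hxτ : x = τ := hmax.2 x hxK hf.1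
        have := hf.2
        rw [hxτ] at this
        omega
      · rcases Set.mem_insert_iff.mp hx with h | h
        · exact congrArg Prod.fst h
        · exact absurd ((hWmem _ h).2.2.1) (fun _ => hτK2 ((hWmem _ h).2.1))
    have hnoσ : ∀ a, ¬ Relation.TransGen (VStep K1 V) a σ := by
      intro a h
      obtain ⟨x, -, hx⟩ := Relation.TransGen.tail'_iff.mp h
      exact hinσ x hx
    have hτσ : ∀ a, Relation.TransGen (VStep K1 V) a τ →
        Relation.ReflTransGen (VStep K1 V) a σ := by
      intro a h
      obtain ⟨x, hax, hx⟩ := Relation.TransGen.tail'_iff.mp h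
      rwa [hinτ x hx] at hax
    -- step conversion
    have hconv : ∀ a b : Finset α, VStep K1 V a b → a ≠ σ → a ≠ τ → b ≠ σ → b ≠ τ →
        VStep K2 W a b := by
      rintro a b (⟨haK, hbK, hf, hn⟩ | hy) haσ haτ hbσ hbτ
      · refine Or.inl ⟨?_, ?_, hf, fun h => hn (hWV h)⟩
        · rw [hK2]
          refine ⟨haK, ?_⟩
          rintro (h | h)
          · exact haσ h
          · exact haτ h
        · rw [hK2]
          refine ⟨hbK, ?_⟩
          rintro (h | h)
          · exact hbσ h
          · exact hbτ h
      · rcases Set.mem_insert_iff.mp hy with h | h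
        · exact absurd (congrArg Prod.fst h) haσ
        · exact Or.inr h
    -- transfer of cycles avoiding σ, τ
    have htrans : ∀ a b : Finset α, Relation.TransGen (VStep K1 V) a b → b ≠ σ → b ≠ τ →
        a = σ ∨ a = τ ∨ Relation.TransGen (VStep K2 W) a b := by
      intro a b h
      induction h using Relation.TransGen.head_induction_on with
      | single hab =>
        intro hbσ hbτ
        rename_i a'
        by_cases haσ : a' = σ
        · exact Or.inl haσ
        by_cases haτ : a' = τ
        · exact Or.inr (Or.inl haτ)
        exact Or.inr (Or.inr (Relation.TransGen.single (hconv _ _ hab haσ haτ hbσ hbτ)))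
      | head hac hcb ihc =>
        intro hbσ hbτ
        rename_i a' c'
        by_cases hcσ : c' = σ
        · exact absurd hac (hcσ ▸ hinσ a')
        by_cases hcτ : c' = τ
        · exact Or.inl (hinτ a' (hcτ ▸ hac))
        rcases ihc hbσ hbτ with h | h | h
        · exact absurd h hcσ
        · exact absurd h hcτ
        by_cases haσ : a' = σ
        · exact Or.inl haσ
        by_cases haτ : a' = τ
        · exact Or.inr (Or.inl haτ)
        exact Or.inr (Or.inr (Relation.TransGen.head (hconv _ _ hac haσ haτ hcσ hcτ) h))
    -- acyclicity
    have cond3 : ∀ z : Finset α, ¬ Relation.TransGen (VStep K1 V) z z := by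
      intro z hz
      by_cases hzσ : z = σ
      · exact hnoσ z (hzσ ▸ hz)
      by_cases hzτ : z = τ
      · subst hzτ
        rcases (hτσ z hz).cases_tail with h | ⟨c, hc, hcσ⟩
        · exact hστne h
        · exact hinσ c hcσ
      rcases htrans z z hz hzσ hzτ with h | h | h
      · exact hzσ h
      · exact hzτ h
      · exact hW.2.2 z h
    refine ⟨V, ⟨cond1, cond2, cond3⟩, ?_⟩
    ext ρ
    simp only [Set.mem_setOf_eq, Set.mem_singleton_iff]
    constructor
    · rintro ⟨hρK, hun⟩
      have h1 := hun (σ, τ) hστV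
      have hρK2 : ρ ∈ K2 := by
        rw [hK2]
        refine ⟨hρK, ?_⟩
        rintro (h | h)
        · exact h1.1 h
        · exact h1.2 h
      have : ρ ∈ {σ' | IsCritical K2 W σ'} :=
        ⟨hρK2, fun r hr => hun r (hWV hr)⟩
      rw [hWcrit] at this
      exact this
    · rintro rfl
      have hq : IsCritical K2 W {q} := by
        have : ({q} : Finset α) ∈ {σ' | IsCritical K2 W σ'} := by rw [hWcrit]; rfl
        exact this
      refine ⟨hsub hq.1, ?_⟩
      intro r hr
      rcases Set.mem_insert_iff.mp hr with rfl | hrW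
      · exact ⟨fun h => hσK2 ((show ({q} : Finset α) = σ from h) ▸ hq.1),
          fun h => hτK2 ((show ({q} : Finset α) = τ from h) ▸ hq.1)⟩
      · exact hq.2 r hrW

/-- Reversing a single matched edge at the critical vertex moves the critical
vertex across that edge. -/
lemma stepLemma [DecidableEq α] {K : Set (Finset α)} (hK : IsComplex K)
    {V : Set (Finset α × Finset α)} (hV : IsDGVF K V) {q w : α} {e : Finset α}
    (hcrit : {σ : Finset α | IsCritical K V σ} = ({({q} : Finset α)} : Set (Finset α)))
    (hwe : (({w} : Finset α), e) ∈ V) (hqe : q ∈ e) (hwq : w ≠ q) :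
    IsDGVF K (insert (({q} : Finset α), e) (V \ {(({w} : Finset α), e)})) ∧
    {σ : Finset α | IsCritical K (insert (({q} : Finset α), e)
        (V \ {(({w} : Finset α), e)})) σ}
      = ({({w} : Finset α)} : Set (Finset α)) := by
  obtain ⟨hwK, heK, hfwe⟩ := hV.1 _ hwe
  have hwe' : w ∈ e := Finset.singleton_subset_iff.mp hfwe.1
  have hcard_e : e.card = 2 := by
    have := hfwe.2
    simp only [Finset.card_singleton] at this
    omega
  have hqcrit : IsCritical K V {q} := by
    have : ({q} : Finset α) ∈ {σ : Finset α | IsCritical K V σ} := by rw [hcrit]; rfl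
    exact this
  have hqK : ({q} : Finset α) ∈ K := hqcrit.1
  have hqun := hqcrit.2
  have hwqS : ({w} : Finset α) ≠ ({q} : Finset α) := by
    simpa using hwq
  have he2 : e = ({w, q} : Finset α) := by
    refine (Finset.eq_of_subset_of_card_le ?_ ?_).symm
    · intro x hx
      rcases Finset.mem_insert.mp hx with rfl | hx
      · exact hwe'
      · rw [Finset.mem_singleton.mp hx]; exact hqe
    · rw [hcard_e, Finset.card_insert_of_notMem (by simpa using hwq),
        Finset.card_singleton]
  have hew : e ≠ ({w} : Finset α) := by
    intro h; rw [h, Finset.card_singleton] at hcard_e; omega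
  have heq : e ≠ ({q} : Finset α) := by
    intro h; rw [h, Finset.card_singleton] at hcard_e; omega
  set pw : Finset α × Finset α := (({w} : Finset α), e) with hpw
  set pq : Finset α × Finset α := (({q} : Finset α), e) with hpq
  set V' : Set (Finset α × Finset α) := insert pq (V \ {pw}) with hV'
  have hpqV' : pq ∈ V' := Set.mem_insert _ _
  -- any pair of V sharing a simplex with pw is pw itself
  have hw_only : ∀ r ∈ V,
      (({w} : Finset α) = r.1 ∨ ({w} : Finset α) = r.2 ∨ e = r.1 ∨ e = r.2) → r = pw := by
    intro r hr h
    exact (hV.2.1 pw hwe r hr h).symm ▸ rfl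
  -- condition 1
  have cond1 : ∀ r ∈ V', r.1 ∈ K ∧ r.2 ∈ K ∧ IsFacet r.1 r.2 := by
    intro r hr
    rcases Set.mem_insert_iff.mp hr with rfl | hr
    · refine ⟨hqK, heK, Finset.singleton_subset_iff.mpr hqe, ?_⟩
      rw [hcard_e, Finset.card_singleton]
    · exact hV.1 r hr.1
  -- condition 2
  have cond2 : ∀ r ∈ V', ∀ s ∈ V',
      (r.1 = s.1 ∨ r.1 = s.2 ∨ r.2 = s.1 ∨ r.2 = s.2) → r = s := by
    intro r hr s hs hsh
    rcases Set.mem_insert_iff.mp hr with rfl | hr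
    · rcases Set.mem_insert_iff.mp hs with rfl | hs
      · rfl
      · exfalso
        rcases hsh with h | h | h | h
        · exact (hqun s hs.1).1 h
        · exact (hqun s hs.1).2 h
        · exact hs.2 (hw_only s hs.1 (Or.inr (Or.inr (Or.inl h))))
        · exact hs.2 (hw_only s hs.1 (Or.inr (Or.inr (Or.inr h))))
    · rcases Set.mem_insert_iff.mp hs with rfl | hs
      · exfalso
        rcases hsh with h | h | h | h
        · exact (hqun r hr.1).1 h.symm
        · exact hr.2 (hw_only r hr.1 (Or.inr (Or.inr (Or.inl h.symm))))
        · exact (hqun r hr.1).2 h.symm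
        · exact hr.2 (hw_only r hr.1 (Or.inr (Or.inr (Or.inr h.symm))))
      · exact hV.2.1 r hr.1 s hs.1 hsh
    -- note: the case r.2 = pq.1 above means r.2 = {q}; handled via hqun
  -- outgoing edges from {w}, e, {q}
  have hout_w : ∀ y, ¬ VStep K V' ({w} : Finset α) y := by
    rintro y (⟨-, hyK, hf, -⟩ | hy)
    · have h0 := hf.2
      have h1 := Finset.card_pos.mpr (hK.1 y hyK)
      simp only [Finset.card_singleton] at h0
      omega
    · rcases Set.mem_insert_iff.mp hy with h | h
      · exact hwqS (congrArg Prod.fst h)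
      · exact h.2 (hw_only _ h.1 (Or.inl rfl))
  have hout_e : ∀ y, VStep K V' e y → y = ({w} : Finset α) := by
    rintro y (⟨-, hyK, hf, hn⟩ | hy)
    · have hy1 : y.card = 1 := by
        have := hf.2; rw [hcard_e] at this; omega
      obtain ⟨a, rfl⟩ := Finset.card_eq_one.mp hy1
      have ha : a ∈ e := hf.1 (Finset.mem_singleton_self a)
      rw [he2] at ha
      rcases Finset.mem_insert.mp ha with rfl | ha
      · rfl
      · rw [Finset.mem_singleton.mp ha] at hn ⊢
        exact absurd hpqV' hn
    · exfalso
      rcases Set.mem_insert_iff.mp hy with h | h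
      · exact heq (congrArg Prod.fst h)
      · exact hew (show e = ({w} : Finset α) from
          congrArg Prod.fst (hw_only _ h.1 (Or.inr (Or.inr (Or.inl rfl)))))
  have hout_q : ∀ y, VStep K V' ({q} : Finset α) y → y = e := by
    rintro y (⟨-, hyK, hf, -⟩ | hy)
    · exfalso
      have h0 := hf.2
      have h1 := Finset.card_pos.mpr (hK.1 y hyK)
      simp only [Finset.card_singleton] at h0
      omega
    · rcases Set.mem_insert_iff.mp hy with h | h
      · exact congrArg Prod.snd h
      · exact absurd rfl (hqun _ h.1).1
  -- reachability from the three special simplices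
  have hnw : ∀ b, ¬ Relation.TransGen (VStep K V') ({w} : Finset α) b := by
    intro b h
    obtain ⟨c, hc, -⟩ := Relation.TransGen.head'_iff.mp h
    exact hout_w c hc
  have hne_reach : ∀ b, Relation.TransGen (VStep K V') e b → b = ({w} : Finset α) := by
    intro b h
    obtain ⟨c, hc, hcb⟩ := Relation.TransGen.head'_iff.mp h
    rw [hout_e c hc] at hcb
    rcases hcb.cases_head with h | ⟨d, hd, -⟩
    · exact h.symm
    · exact absurd hd (hout_w d)
  have hnq_reach : ∀ b, Relation.TransGen (VStep K V') ({q} : Finset α) b →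
      b = e ∨ b = ({w} : Finset α) := by
    intro b h
    obtain ⟨c, hc, hcb⟩ := Relation.TransGen.head'_iff.mp h
    rw [hout_q c hc] at hcb
    rcases hcb.cases_head with h | ⟨d, hd, hdb⟩
    · exact Or.inl h.symm
    · rw [hout_e d hd] at hdb
      rcases hdb.cases_head with h | ⟨d', hd', -⟩
      · exact Or.inr h.symm
      · exact absurd hd' (hout_w d')
  -- step conversion
  have hconv : ∀ x y : Finset α, VStep K V' x y → x ≠ ({q} : Finset α) →
      y ≠ ({w} : Finset α) → VStep K V x y := by
    rintro x y (⟨hxK, hyK, hf, hn⟩ | hy) hxq hyw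
    · refine Or.inl ⟨hxK, hyK, hf, fun hmem => hn ?_⟩
      refine Set.mem_insert_of_mem _ ⟨hmem, fun hEq => hyw ?_⟩
      exact congrArg Prod.fst hEq
    · rcases Set.mem_insert_iff.mp hy with h | h
      · exact absurd (congrArg Prod.fst h) hxq
      · exact Or.inr h.1
  -- transfer of cycles avoiding the three special simplices
  have htr : ∀ a b : Finset α, Relation.TransGen (VStep K V') a b →
      b ≠ ({w} : Finset α) → b ≠ e → b ≠ ({q} : Finset α) →
      Relation.TransGen (VStep K V) a b := by
    intro a b h
    induction h using Relation.TransGen.head_induction_on with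
    | single hab =>
      intro h1 h2 h3
      rename_i a'
      have haq : a' ≠ ({q} : Finset α) := fun h => h2 (hout_q _ (h ▸ hab))
      exact Relation.TransGen.single (hconv _ _ hab haq h1)
    | head hac hcb ihc =>
      intro h1 h2 h3
      rename_i a' c'
      have hcw : c' ≠ ({w} : Finset α) := fun h => hnw _ (h ▸ hcb)
      have hce : c' ≠ e := fun h => h1 (hne_reach b (h ▸ hcb))
      have haq : a' ≠ ({q} : Finset α) := fun h => hce (hout_q _ (h ▸ hac))
      exact Relation.TransGen.head (hconv _ _ hac haq hcw) (ihc h1 h2 h3)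
  -- acyclicity
  have cond3 : ∀ z : Finset α, ¬ Relation.TransGen (VStep K V') z z := by
    intro z hz
    by_cases hzw : z = ({w} : Finset α)
    · subst hzw; exact hnw _ hz
    by_cases hze : z = e
    · subst hze; exact hew (hne_reach _ hz)
    by_cases hzq : z = ({q} : Finset α)
    · subst hzq
      rcases hnq_reach _ hz with h | h
      · exact heq h.symm
      · exact hwqS h.symm
    exact hV.2.2 z (htr z z hz hzw hze hzq)
  refine ⟨⟨cond1, cond2, cond3⟩, ?_⟩
  ext ρ
  simp only [Set.mem_setOf_eq, Set.mem_singleton_iff]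
  constructor
  · rintro ⟨hρK, hun⟩
    by_contra hne
    have hρq : ρ ≠ ({q} : Finset α) := (hun pq hpqV').1
    have hρcrit : IsCritical K V ρ := by
      refine ⟨hρK, fun r hr => ?_⟩
      by_cases hrw : r = pw
      · subst hrw
        exact ⟨hne, (hun pq hpqV').2⟩
      · exact hun r (Set.mem_insert_of_mem _ ⟨hr, hrw⟩)
    have : ρ ∈ {σ : Finset α | IsCritical K V σ} := hρcrit
    rw [hcrit] at this
    exact hρq this
  · rintro rfl
    refine ⟨hwK, fun r hr => ?_⟩
    rcases Set.mem_insert_iff.mp hr with rfl | hr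
    · exact ⟨hwqS, fun h => hew h.symm⟩
    · refine ⟨fun h => hr.2 (hw_only r hr.1 (Or.inl h)), fun h => hr.2 (hw_only r hr.1 (Or.inr (Or.inl h)))⟩

/-- The critical vertex of a gradient vector field with a unique critical simplex
can be moved to any vertex of the complex. -/
lemma walk [DecidableEq α] {K : Set (Finset α)} (hfin : K.Finite) (hK : IsComplex K)
    {V : Set (Finset α × Finset α)} (hV : IsDGVF K V) {q : α}
    (hcrit : {σ : Finset α | IsCritical K V σ} = ({({q} : Finset α)} : Set (Finset α)))
    (p : α) (hp : ({p} : Finset α) ∈ K) :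
    ∃ V', IsDGVF K V' ∧
      {σ : Finset α | IsCritical K V' σ} = ({({p} : Finset α)} : Set (Finset α)) := by
  let S := {v : α // ({v} : Finset α) ∈ K}
  haveI : Finite S := by
    haveI := hfin.to_subtype
    exact Finite.of_injective (fun v : S => (⟨{v.1}, v.2⟩ : K)) (by
      intro a b h
      simp only [Subtype.mk.injEq, Finset.singleton_inj] at h
      exact Subtype.ext h)
  let r : S → S → Prop := fun a b =>
    Relation.TransGen (VStep K V) ({b.1} : Finset α) ({a.1} : Finset α)
  haveI : IsTrans S r := ⟨fun a b c hab hbc => hbc.trans hab⟩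
  haveI : IsIrrefl S r := ⟨fun a h => hV.2.2 _ h⟩
  have wf := Finite.wellFounded_of_trans_of_irrefl r
  have main : ∀ v : S, ∃ V', IsDGVF K V' ∧
      {σ : Finset α | IsCritical K V' σ} = ({({v.1} : Finset α)} : Set (Finset α)) ∧
      ∀ ρ ∈ V, ρ ∉ V' → Relation.ReflTransGen (VStep K V) ({v.1} : Finset α) ρ.1 := by
    intro v
    refine wf.induction (C := fun v : S => ∃ V', IsDGVF K V' ∧
      {σ : Finset α | IsCritical K V' σ} = ({({v.1} : Finset α)} : Set (Finset α)) ∧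
      ∀ ρ ∈ V, ρ ∉ V' → Relation.ReflTransGen (VStep K V) ({v.1} : Finset α) ρ.1) v ?_
    clear v
    intro v ih
    by_cases hvq : v.1 = q
    · exact ⟨V, hV, by rw [hvq]; exact hcrit, fun ρ h1 h2 => absurd h1 h2⟩
    -- v is matched; it is matched as the lower simplex of a pair
    have hnc : ¬ IsCritical K V ({v.1} : Finset α) := by
      intro h
      have : ({v.1} : Finset α) ∈ {σ : Finset α | IsCritical K V σ} := h
      rw [hcrit] at this
      exact hvq (Finset.singleton_inj.mp this)
    have hmatch : ∃ ρ ∈ V, ({v.1} : Finset α) = ρ.1 ∨ ({v.1} : Finset α) = ρ.2 := by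
      by_contra h
      push_neg at h
      exact hnc ⟨v.2, fun ρ hρ => ⟨(h ρ hρ).1, (h ρ hρ).2⟩⟩
    obtain ⟨ρ, hρV, hm⟩ := hmatch
    obtain ⟨r1, e⟩ := ρ
    obtain ⟨hr1K, heK, hrf⟩ := hV.1 _ hρV
    dsimp only at hm hr1K heK hrf
    rcases hm with h1 | h1
    · -- ({v.1}, e) ∈ V
      subst h1
      have hv1e : v.1 ∈ e := Finset.singleton_subset_iff.mp hrf.1
      have hcard2 : e.card = 2 := by
        have := hrf.2
        simp only [Finset.card_singleton] at this
        omega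
      have h1c : (e.erase v.1).card = 1 := by
        rw [Finset.card_erase_of_mem hv1e, hcard2]
      obtain ⟨w, hw⟩ := Finset.card_eq_one.mp h1c
      have hwmem : w ∈ e.erase v.1 := by rw [hw]; exact Finset.mem_singleton_self w
      have hwv : w ≠ v.1 := (Finset.mem_erase.mp hwmem).1
      have hwe : w ∈ e := (Finset.mem_erase.mp hwmem).2
      have hwK : ({w} : Finset α) ∈ K :=
        hK.2 e heK {w} (Finset.singleton_subset_iff.mpr hwe) (Finset.singleton_nonempty w)
      have hnwe : (({w} : Finset α), e) ∉ V := by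
        intro h
        have := hV.2.1 _ hρV _ h (Or.inr (Or.inr (Or.inr rfl)))
        have : ({v.1} : Finset α) = ({w} : Finset α) := congrArg Prod.fst this
        exact hwv (Finset.singleton_inj.mp this).symm
      have htg : Relation.TransGen (VStep K V) ({v.1} : Finset α) ({w} : Finset α) :=
        Relation.TransGen.head (Or.inr hρV)
          (Relation.TransGen.single (Or.inl ⟨heK, hwK,
            ⟨Finset.singleton_subset_iff.mpr hwe, by
              rw [hcard2, Finset.card_singleton]⟩, hnwe⟩))
      obtain ⟨V₂, hV₂, hcrit₂, hinv₂⟩ := ih ⟨w, hwK⟩ htg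
      have hveV₂ : (({v.1} : Finset α), e) ∈ V₂ := by
        by_contra hcon
        have hrt := hinv₂ _ hρV hcon
        rcases hrt.cases_head with h | ⟨c, hc, hcb⟩
        · exact hwv (Finset.singleton_inj.mp h)
        · exact hV.2.2 _ ((Relation.TransGen.head' hc hcb).trans htg)
      obtain ⟨hV₃, hcrit₃⟩ := stepLemma hK hV₂ hcrit₂ hveV₂ hwe hwv.symm
      refine ⟨_, hV₃, hcrit₃, ?_⟩
      intro ρ hρ hρ3
      by_cases hρe : ρ = (({v.1} : Finset α), e)
      · rw [hρe]
      · by_cases hρ2 : ρ ∈ V₂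
        · exact absurd (Set.mem_insert_of_mem _ (Set.mem_diff_singleton.mpr ⟨hρ2, hρe⟩)) hρ3
        · exact (htg.to_reflTransGen).trans (hinv₂ ρ hρ hρ2)
    · -- {v.1} = ρ.2 is impossible for dimension reasons
      exfalso
      have hfc := hrf.2
      have := Finset.card_pos.mpr (hK.1 _ hr1K)
      rw [← h1, Finset.card_singleton] at hfc
      omega
  obtain ⟨V', h1, h2, -⟩ := main ⟨p, hp⟩
  exact ⟨V', h1, h2⟩

end Aux

/-- a collapsible connected complex admits a gradient whose unique
critical simplex is a prescribed vertex `p`. -/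
theorem stmt1 {α : Type*} [DecidableEq α] (K : Set (Finset α)) (hfin : K.Finite) (hK : IsComplex K)
    (hconn : ComplexConnected K) (hcoll : Collapsible K)
    (p : α) (hp : ({p} : Finset α) ∈ K) :
    ∃ V : Set (Finset α × Finset α), IsDGVF K V ∧
      {σ : Finset α | IsCritical K V σ} = ({({p} : Finset α)} : Set (Finset α)) := by
  obtain ⟨q, hcq⟩ := hcoll
  obtain ⟨V, hV, hcrit⟩ := grad q K hcq hfin hK
  exact walk hfin hK hV hcrit p hp

end MorseApprox
end

section
/- If L₁ and L₂ are erasable subcomplexes of a 2-dimensional finite abstract simplicial complex K, then the union L₁ ∪ L₂ is also an erasable subcomplex of K. -/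
namespace MorseApprox

variable {α : Type*}

lemma elem_subset' {X X' : Set (Finset α)} (h : ElemCollapse X X') : X' ⊆ X := by
  obtain ⟨σ, τ, -, -, -, -, rfl⟩ := h
  exact Set.diff_subset

lemma collapses_subset' {X Y : Set (Finset α)} (h : Collapses X Y) : Y ⊆ X := by
  induction h with
  | refl => exact subset_rfl
  | tail _ h ih => exact (elem_subset' h).trans ih

lemma exists_maximal' {X : Set (Finset α)} (hfin : X.Finite) {ρ : Finset α} (hρ : ρ ∈ X) :
    ∃ μ, IsMaximalFace X μ ∧ ρ ⊆ μ := by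
  obtain ⟨μ, hμ, hmax⟩ := Set.Finite.exists_maximalFor Finset.card
    {τ ∈ X | ρ ⊆ τ} (hfin.subset (Set.sep_subset _ _)) ⟨ρ, hρ, subset_rfl⟩
  refine ⟨μ, ⟨hμ.1, fun ρ' hρ' hsub => ?_⟩, hμ.2⟩
  have hρ'' : ρ' ∈ {τ ∈ X | ρ ⊆ τ} := ⟨hρ', hμ.2.trans hsub⟩
  exact (Finset.eq_of_subset_of_card_le hsub
    ((hmax hρ'' (Finset.card_le_card hsub)).ge)).symm

lemma elem_complex' {X X' : Set (Finset α)} (hX : IsComplex X) (hfin : X.Finite)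
    (h : ElemCollapse X X') : IsComplex X' := by
  obtain ⟨σ, τ, hfree, hmax, hsub, hcard, rfl⟩ := h
  refine ⟨fun ρ hρ => hX.1 ρ hρ.1, fun ρ hρ ρ' hsub' hne => ?_⟩
  have hρ' : ρ' ∈ X := hX.2 ρ hρ.1 ρ' hsub' hne
  have hρX : ρ ∈ X := hρ.1
  have hρσ : ρ ≠ σ := fun h => hρ.2 (by simp [h])
  have hρτ : ρ ≠ τ := fun h => hρ.2 (by simp [h])
  refine ⟨hρ', ?_⟩
  intro hmem
  simp only [Set.mem_insert_iff, Set.mem_singleton_iff] at hmem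
  rcases hmem with hcase | hcase
  · -- ρ' = σ
    subst hcase
    obtain ⟨μ, hμmax, hρμ⟩ := exists_maximal' hfin hρX
    obtain ⟨τ₀, hτ₀, huniq⟩ := hfree.2.2
    have hμτ : μ = τ := by
      rw [huniq μ ⟨hμmax, hsub'.trans hρμ⟩, huniq τ ⟨hmax, hsub⟩]
    have hρτ' : ρ ⊆ τ := hμτ ▸ hρμ
    have h1 : ρ'.card ≤ ρ.card := Finset.card_le_card hsub'
    have h2 : ρ.card ≤ τ.card := Finset.card_le_card hρτ'
    rcases Nat.lt_or_ge ρ'.card ρ.card with hlt | hge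
    · exact hρτ (Finset.eq_of_subset_of_card_le hρτ' (by omega))
    · exact hρσ (Finset.eq_of_subset_of_card_le hsub' hge).symm
  · -- ρ' = τ
    subst hcase
    exact hρτ (hmax.2 ρ hρX hsub')

lemma collapses_complex' {X Y : Set (Finset α)} (h : Collapses X Y)
    (hX : IsComplex X) (hfin : X.Finite) : IsComplex Y := by
  induction h with
  | refl => exact hX
  | tail hc h ih => exact elem_complex' ih (hfin.subset (collapses_subset' hc)) h

/-- The key replay lemma: a collapse of `X` onto `Y` inside the 2-complex `K`
can be replayed on any subcomplex `N` of `K` whose 2-simplices all lie in `X`,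
erasing from `N` exactly the 2-simplices that the original collapse erased. -/
lemma replay' {K : Set (Finset α)} (hK : IsComplex K) (hKfin : K.Finite)
    (hdim : ∀ σ ∈ K, σ.card ≤ 3) :
    ∀ {X Y : Set (Finset α)}, Collapses X Y → X ⊆ K →
    ∀ N : Set (Finset α), IsComplex N → N ⊆ K →
      twoSimplices N ⊆ twoSimplices X →
      ∃ N', Collapses N N' ∧ N' ⊆ N ∧ N \ N' ⊆ X \ Y ∧
        twoSimplices N' = twoSimplices N ∩ twoSimplices Y := by
  intro X Y hXY
  induction hXY using Relation.ReflTransGen.head_induction_on with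
  | refl =>
    intro hXK N hN hNK hNX
    refine ⟨N, Relation.ReflTransGen.refl, subset_rfl, by simp, ?_⟩
    exact (Set.inter_eq_left.mpr hNX).symm
  | head h hrest ih =>
    rename_i X X₁
    intro hXK N hN hNK hNX
    obtain ⟨σ, τ, hfree, hmax, hsub, hcard, hX₁⟩ := h
    have hX₁K : X₁ ⊆ K := by rw [hX₁]; exact Set.diff_subset.trans hXK
    have hYX₁ : Y ⊆ X₁ := collapses_subset' hrest
    have hσcard : σ.card + 1 ≤ 3 := hcard ▸ hdim τ (hXK hmax.1)
    by_cases hτN : τ ∈ N ∧ τ.card = 3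
    · -- replay the collapse step on N
      obtain ⟨hτN, hτ3⟩ := hτN
      have hσ2 : σ.card = 2 := by omega
      have hσN : σ ∈ N := hN.2 τ hτN σ hsub (by rw [← Finset.card_pos, hσ2]; omega)
      have hστ : σ ≠ τ := by intro h; rw [h] at hσ2; omega
      have hmaxN : IsMaximalFace N τ := by
        refine ⟨hτN, fun ρ hρ hτρ => ?_⟩
        have := hdim ρ (hNK hρ)
        exact (Finset.eq_of_subset_of_card_le hτρ (by omega)).symm
      have hfreeN : IsFreeFace N σ := by
        refine ⟨hσN, ?_, ⟨τ, ⟨hmaxN, hsub⟩, ?_⟩⟩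
        · intro hmx
          exact hστ (hmx.2 τ hτN hsub).symm
        · rintro ρ ⟨hρmax, hσρ⟩
          have hρK : ρ ∈ K := hNK hρmax.1
          have hρ3 := hdim ρ hρK
          rcases Nat.lt_or_ge ρ.card 3 with hlt | hge
          · -- ρ.card ≤ 2 so ρ = σ, contradicting maximality via τ
            have hσρ' : σ = ρ := Finset.eq_of_subset_of_card_le hσρ (by omega)
            exact (hρmax.2 τ hτN (hσρ' ▸ hsub)).symm
          · -- ρ is a triangle of N, hence of X, hence maximal in X, hence = τ
            have hρ3' : ρ.card = 3 := by omega
            have hρX : ρ ∈ X := (hNX ⟨hρmax.1, hρ3'⟩).1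
            have hρmaxX : IsMaximalFace X ρ := by
              refine ⟨hρX, fun ρ' hρ' hρρ' => ?_⟩
              have := hdim ρ' (hXK hρ')
              exact (Finset.eq_of_subset_of_card_le hρρ' (by omega)).symm
            obtain ⟨τ₀, hτ₀, huniq⟩ := hfree.2.2
            rw [huniq ρ ⟨hρmaxX, hσρ⟩, huniq τ ⟨hmax, hsub⟩]
      have hElemN : ElemCollapse N (N \ {σ, τ}) :=
        ⟨σ, τ, hfreeN, hmaxN, hsub, hcard, rfl⟩
      set N₂ := N \ {σ, τ} with hN₂
      have hN₂N : N₂ ⊆ N := Set.diff_subset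
      have hN₂c : IsComplex N₂ := elem_complex' hN (hKfin.subset hNK) hElemN
      have hN₂X₁ : twoSimplices N₂ ⊆ twoSimplices X₁ := by
        rintro t ⟨ht, ht3⟩
        have htX : t ∈ X := (hNX ⟨ht.1, ht3⟩).1
        rw [hX₁]
        exact ⟨⟨htX, ht.2⟩, ht3⟩
      obtain ⟨N', hcol, hN'sub, hdiff, htri⟩ := ih hX₁K N₂ hN₂c (hN₂N.trans hNK) hN₂X₁
      refine ⟨N', Relation.ReflTransGen.head hElemN hcol, hN'sub.trans hN₂N, ?_, ?_⟩
      · intro x hx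
        by_cases hxN₂ : x ∈ N₂
        · have hmem := hdiff ⟨hxN₂, hx.2⟩
          refine ⟨?_, hmem.2⟩
          have hxX₁ : x ∈ X₁ := hmem.1
          rw [hX₁] at hxX₁
          exact hxX₁.1
        · have hxστ : x ∈ ({σ, τ} : Set (Finset α)) := by
            by_contra hc
            exact hxN₂ ⟨hx.1, hc⟩
          have hxX : x ∈ X := by
            rcases hxστ with rfl | rfl
            · exact hfree.1
            · exact hmax.1
          refine ⟨hxX, fun hxY => ?_⟩
          have := hYX₁ hxY
          rw [hX₁] at this
          exact this.2 hxστ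
      · rw [htri]
        ext t
        simp only [Set.mem_inter_iff, twoSimplices, Set.mem_setOf_eq, hN₂,
          Set.mem_diff]
        constructor
        · rintro ⟨⟨⟨h1, _⟩, h2⟩, h3⟩; exact ⟨⟨h1, h2⟩, h3⟩
        · rintro ⟨⟨h1, h2⟩, h3⟩
          refine ⟨⟨⟨h1, fun hc => ?_⟩, h2⟩, h3⟩
          have := hYX₁ h3.1
          rw [hX₁] at this
          exact this.2 hc
    · -- skip this step: the triangle removed is not in N
      have hNX₁ : twoSimplices N ⊆ twoSimplices X₁ := by
        rintro t ⟨ht, ht3⟩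
        have htX : t ∈ X := (hNX ⟨ht, ht3⟩).1
        rw [hX₁]
        refine ⟨⟨htX, ?_⟩, ht3⟩
        intro hmem
        simp only [Set.mem_insert_iff, Set.mem_singleton_iff] at hmem
        rcases hmem with hcase | hcase
        · rw [hcase] at ht3; omega
        · exact hτN ⟨hcase ▸ ht, hcase ▸ ht3⟩
      obtain ⟨N', hcol, hN'sub, hdiff, htri⟩ := ih hX₁K N hN hNK hNX₁
      refine ⟨N', hcol, hN'sub, hdiff.trans ?_, htri⟩
      intro x hx
      exact ⟨(hX₁ ▸ Set.diff_subset : X₁ ⊆ X) hx.1, hx.2⟩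

/-- the union of two erasable subcomplexes of a 2-complex is erasable. -/
theorem stmt2 {α : Type*} (K L₁ L₂ : Set (Finset α)) (hfin : K.Finite)
    (hK : IsComplex K) (hdim : ∀ σ ∈ K, σ.card ≤ 3)
    (hL₁ : IsSubcomplex L₁ K) (hL₂ : IsSubcomplex L₂ K)
    (h₁ : ErasableSubcomplex K L₁) (h₂ : ErasableSubcomplex K L₂) :
    ErasableSubcomplex K (L₁ ∪ L₂) := by
  obtain ⟨M₁, hM₁sub, hcol₁, hdiff₁, htri₁⟩ := h₁
  obtain ⟨M₂, hM₂sub, hcol₂, hdiff₂, htri₂⟩ := h₂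
  have hM₂K : M₂ ⊆ K := hM₂sub.1
  have hM₁K : M₁ ⊆ K := hM₁sub.1
  have hM₂tri : twoSimplices M₂ ⊆ twoSimplices K := by
    rintro t ⟨ht, ht3⟩; exact ⟨hM₂K ht, ht3⟩
  obtain ⟨N', hcol, hN'M₂, hdiff, htri⟩ :=
    replay' hK hfin hdim hcol₁ subset_rfl M₂ hM₂sub.2 hM₂K hM₂tri
  have hN'K : N' ⊆ K := hN'M₂.trans hM₂K
  refine ⟨N', ⟨hN'K, collapses_complex' hcol hM₂sub.2 (hfin.subset hM₂K)⟩,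
    hcol₂.trans hcol, ?_, ?_⟩
  · intro x hx
    by_cases hxM₂ : x ∈ M₂
    · exact Or.inl (hdiff₁ (hdiff ⟨hxM₂, hx.2⟩))
    · exact Or.inr (hdiff₂ ⟨hx.1, hxM₂⟩)
  · have hU : twoSimplices (L₁ ∪ L₂) = twoSimplices L₁ ∪ twoSimplices L₂ := by
      ext t
      simp only [twoSimplices, Set.mem_setOf_eq, Set.mem_union]
      tauto
    rw [hU, ← htri₁, ← htri₂]
    ext t
    simp only [Set.mem_diff, Set.mem_union, twoSimplices, Set.mem_setOf_eq]
    constructor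
    · rintro ⟨⟨htK, ht3⟩, htN'⟩
      by_cases hxM₂ : t ∈ M₂
      · exact Or.inl ⟨⟨htK, ht3⟩, (hdiff ⟨hxM₂, htN'⟩).2⟩
      · exact Or.inr ⟨⟨htK, ht3⟩, hxM₂⟩
    · rintro (⟨⟨htK, ht3⟩, htM₁⟩ | ⟨⟨htK, ht3⟩, htM₂⟩)
      · refine ⟨⟨htK, ht3⟩, fun hc => ?_⟩
        have : t ∈ twoSimplices N' := ⟨hc, ht3⟩
        rw [htri] at this
        exact htM₁ this.2.1
      · exact ⟨⟨htK, ht3⟩, fun hc => htM₂ (hN'M₂ hc)⟩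

end MorseApprox
end

section
/- Let G = (V,E) be a finite directed graph, let f(G) be the oriented graph obtained from G by removing all loops and, for each pair of anti-parallel edges, both edges of the pair, and let k be the number of anti-parallel edge pairs of G. Then: (i) for every acyclic subgraph A of f(G) there exists an acyclic subgraph B of G whose edge set contains the edges of A and has cardinality exactly |E(A)| + k; and (ii) the maximum number of edges of an acyclic subgraph of G equals the maximum number of edges of an acyclic subgraph of f(G) plus k. Moreover, if G has total degree (in-degree plus out-degree) at most 3 at every vertex, then so does f(G). -/
namespace MorseApprox

variable {α : Type*}

/-- An oriented graph: a directed graph with no loops and no anti-parallel pairs. -/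
def Oriented (E : Finset (α × α)) : Prop :=
  ∀ e ∈ E, e.1 ≠ e.2 ∧ (e.2, e.1) ∉ E

def outdeg [DecidableEq α] (F : Finset (α × α)) (v : α) : ℕ :=
  (F.filter fun e => e.1 = v).card

def indeg [DecidableEq α] (F : Finset (α × α)) (v : α) : ℕ :=
  (F.filter fun e => e.2 = v).card

/-- Total degree (in-degree plus out-degree) at most 3 at every vertex. -/
def Degree3 [DecidableEq α] (E : Finset (α × α)) : Prop :=
  ∀ v : α, indeg E v + outdeg E v ≤ 3

/-- The underlying undirected graph (on the whole vertex type) is connected. -/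
def GraphConnected (E : Finset (α × α)) : Prop :=
  ∀ x y : α, Relation.ReflTransGen (fun a b : α => (a, b) ∈ E ∨ (b, a) ∈ E) x y

/-- An edge set is acyclic if it contains no directed cycle. -/
def AcyclicEdges (A : Set (α × α)) : Prop :=
  ∀ x : α, ¬ Relation.TransGen (fun a b : α => (a, b) ∈ A) x x

/-- The maximum number of edges of an acyclic subgraph of `E`. -/
noncomputable def maxAcyclic [DecidableEq α] (E : Finset (α × α)) : ℕ :=
  sSup {n | ∃ A : Finset (α × α), A ⊆ E ∧ AcyclicEdges (↑A : Set (α × α)) ∧ n = A.card}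

/-- The minimum cardinality of a feedback arc set of `E`. -/
noncomputable def optMinFAS [DecidableEq α] (E : Finset (α × α)) : ℕ :=
  sInf {n | ∃ F : Finset (α × α), F ⊆ E ∧
    AcyclicEdges (↑(E \ F) : Set (α × α)) ∧ n = F.card}

lemma transGen_union_single {r : α → α → Prop} {u v : α} {a b : α}
    (hab : Relation.TransGen (fun x y => r x y ∨ (x = u ∧ y = v)) a b) :
    Relation.TransGen r a b ∨
      (Relation.ReflTransGen r a u ∧ Relation.ReflTransGen r v b) := by
  induction hab with
  | single hstep =>
    rcases hstep with h1 | ⟨rfl, rfl⟩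
    · exact Or.inl (Relation.TransGen.single h1)
    · exact Or.inr ⟨Relation.ReflTransGen.refl, Relation.ReflTransGen.refl⟩
  | tail hab hstep ih =>
    rcases hstep with h1 | ⟨rfl, rfl⟩
    · rcases ih with h2 | ⟨h2, h3⟩
      · exact Or.inl (h2.tail h1)
      · exact Or.inr ⟨h2, h3.tail h1⟩
    · rcases ih with h2 | ⟨h2, h3⟩
      · exact Or.inr ⟨h2.to_reflTransGen, Relation.ReflTransGen.refl⟩
      · exact Or.inr ⟨h2, Relation.ReflTransGen.refl⟩

lemma acyclic_insert_or {C : Set (α × α)} (hC : AcyclicEdges C) {u v : α} (huv : u ≠ v) :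
    AcyclicEdges (insert (u, v) C) ∨ AcyclicEdges (insert (v, u) C) := by
  by_contra hcon
  push_neg at hcon
  obtain ⟨h1, h2⟩ := hcon
  have key : ∀ u v : α, ¬ AcyclicEdges (insert (u, v) C) →
      Relation.ReflTransGen (fun a b : α => (a, b) ∈ C) v u := by
    intro u v hn
    simp only [AcyclicEdges, not_forall, not_not] at hn
    obtain ⟨x, hx⟩ := hn
    have hx' : Relation.TransGen
        (fun a b : α => (a, b) ∈ C ∨ (a = u ∧ b = v)) x x := by
      refine Relation.TransGen.mono ?_ _ _ hx
      intro a b hab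
      rcases Set.mem_insert_iff.mp hab with h | h
      · exact Or.inr ⟨congrArg Prod.fst h, congrArg Prod.snd h⟩
      · exact Or.inl h
    rcases transGen_union_single hx' with h | ⟨ha, hb⟩
    · exact absurd h (hC x)
    · exact hb.trans ha
  have hvu := key u v h1
  have huv' := key v u h2
  rcases (Relation.reflTransGen_iff_eq_or_transGen.mp hvu) with rfl | ht
  · exact huv rfl
  · exact hC u (Relation.TransGen.trans_right huv' ht)

lemma acyclic_mono {A B : Set (α × α)} (h : A ⊆ B) (hB : AcyclicEdges B) :
    AcyclicEdges A := by
  intro x hx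
  exact hB x (Relation.TransGen.mono (fun a b hab => h hab) _ _ hx)

lemma acyclic_empty [DecidableEq α] :
    AcyclicEdges (↑(∅ : Finset (α × α)) : Set (α × α)) := by
  intro x hx
  cases hx with
  | single h => simp at h
  | tail _ h => simp at h

lemma extend_acyclic [DecidableEq α] (k : ℕ) :
    ∀ (P C : Finset (α × α)),
    (∀ e ∈ P, e.1 ≠ e.2 ∧ (e.2, e.1) ∈ P) →
    (∀ e ∈ P, e ∉ C) →
    AcyclicEdges (↑C : Set (α × α)) →
    2 * k = P.card →
    ∃ B : Finset (α × α), C ⊆ B ∧ B ⊆ C ∪ P ∧ AcyclicEdges (↑B : Set (α × α)) ∧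
      B.card = C.card + k := by
  induction k with
  | zero =>
    intro P C _ _ hC _
    exact ⟨C, subset_rfl, Finset.subset_union_left, hC, rfl⟩
  | succ k ih =>
    intro P C hsym hdisj hC hcard
    have hpos : 0 < P.card := by omega
    obtain ⟨e, he⟩ := Finset.card_pos.mp hpos
    obtain ⟨hne, hswap⟩ := hsym e he
    have hpick := acyclic_insert_or (u := e.1) (v := e.2) hC hne
    have key : ∃ w : α × α, w ∈ P ∧ w.1 ≠ w.2 ∧ w.swap ∈ P ∧
        AcyclicEdges (insert w (↑C : Set (α × α))) := by
      rcases hpick with h | h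
      · exact ⟨e, he, hne, hswap, h⟩
      · exact ⟨(e.2, e.1), hswap, hne.symm, by simpa using he, h⟩
    obtain ⟨w, hwP, hwne, hwsP, hwac⟩ := key
    have hww : w.swap ≠ w := by
      intro h
      exact hwne (congrArg Prod.fst h).symm
    set P' : Finset (α × α) := (P.erase w).erase w.swap with hP'
    have hP'sub : P' ⊆ P := (Finset.erase_subset _ _).trans (Finset.erase_subset _ _)
    have hP'card : P'.card = P.card - 2 := by
      rw [hP', Finset.card_erase_of_mem (Finset.mem_erase.mpr ⟨hww, hwsP⟩),
        Finset.card_erase_of_mem hwP]; omega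
    have hwC : w ∉ C := hdisj w hwP
    have hC' : AcyclicEdges (↑(insert w C) : Set (α × α)) := by
      rwa [Finset.coe_insert]
    have hsym' : ∀ e ∈ P', e.1 ≠ e.2 ∧ (e.2, e.1) ∈ P' := by
      intro f hf
      have hfP := hP'sub hf
      obtain ⟨h1, h2⟩ := hsym f hfP
      refine ⟨h1, Finset.mem_erase.mpr ⟨?_, Finset.mem_erase.mpr ⟨?_, h2⟩⟩⟩
      · intro h
        have : f = w := by
          have := congrArg Prod.swap h
          simpa using this
        rw [hP'] at hf
        exact (Finset.mem_erase.mp (Finset.mem_of_mem_erase hf)).1 (this ▸ rfl)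
      · intro h
        have : f = w.swap := by
          have := congrArg Prod.swap h
          simpa using this
        exact (Finset.mem_erase.mp hf).1 this
    have hdisj' : ∀ e ∈ P', e ∉ insert w C := by
      intro f hf hmem
      rcases Finset.mem_insert.mp hmem with rfl | h
      · exact (Finset.mem_erase.mp (Finset.mem_of_mem_erase hf)).1 rfl
      · exact hdisj f (hP'sub hf) h
    obtain ⟨B, hB1, hB2, hB3, hB4⟩ := ih P' (insert w C) hsym' hdisj' hC'
        (by omega)
    refine ⟨B, ?_, ?_, hB3, ?_⟩
    · exact (Finset.subset_insert _ _).trans hB1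
    · refine hB2.trans ?_
      intro f hf
      rcases Finset.mem_union.mp hf with h | h
      · rcases Finset.mem_insert.mp h with rfl | h
        · exact Finset.mem_union_right _ hwP
        · exact Finset.mem_union_left _ h
      · exact Finset.mem_union_right _ (hP'sub h)
    · rw [hB4, Finset.card_insert_of_notMem hwC]; omega

/-- the strict reduction from MAS to OMAS. `E'` is obtained from `E`
by removing loops and both members of every anti-parallel pair; `k` is the number
of anti-parallel pairs. -/
theorem stmt3 {α : Type*} [DecidableEq α] (E E' : Finset (α × α))
    (hE' : E' = E.filter fun e => e.1 ≠ e.2 ∧ (e.2, e.1) ∉ E)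
    (k : ℕ) (hk : 2 * k = (E.filter fun e => e.1 ≠ e.2 ∧ (e.2, e.1) ∈ E).card) :
    (∀ A : Finset (α × α), A ⊆ E' → AcyclicEdges (↑A : Set (α × α)) →
      ∃ B : Finset (α × α), B ⊆ E ∧ AcyclicEdges (↑B : Set (α × α)) ∧
        A ⊆ B ∧ B.card = A.card + k) ∧
    maxAcyclic E = maxAcyclic E' + k ∧
    (Degree3 E → Degree3 E') := by
  set P : Finset (α × α) := E.filter (fun e => e.1 ≠ e.2 ∧ (e.2, e.1) ∈ E) with hP
  have hPsym : ∀ e ∈ P, e.1 ≠ e.2 ∧ (e.2, e.1) ∈ P := by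
    intro e he
    rw [hP, Finset.mem_filter] at he
    obtain ⟨heE, hne, hrev⟩ := he
    refine ⟨hne, ?_⟩
    rw [hP, Finset.mem_filter]
    exact ⟨hrev, hne.symm, by simpa using heE⟩
  have hE'P : ∀ e ∈ E', e ∉ P := by
    intro e he hPe
    rw [hE', Finset.mem_filter] at he
    rw [hP, Finset.mem_filter] at hPe
    exact he.2.2 hPe.2.2
  have hE'E : E' ⊆ E := by rw [hE']; exact Finset.filter_subset _ _
  have hPE : P ⊆ E := Finset.filter_subset _ _
  have part1 : ∀ A : Finset (α × α), A ⊆ E' → AcyclicEdges (↑A : Set (α × α)) →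
      ∃ B : Finset (α × α), B ⊆ E ∧ AcyclicEdges (↑B : Set (α × α)) ∧
        A ⊆ B ∧ B.card = A.card + k := by
    intro A hAE' hA
    obtain ⟨B, hB1, hB2, hB3, hB4⟩ := extend_acyclic k P A hPsym
      (fun e he hc => hE'P e (hAE' hc) he) hA hk
    exact ⟨B, hB2.trans (Finset.union_subset (hAE'.trans hE'E) hPE), hB3, hB1, hB4⟩
  have hne_set : ∀ F : Finset (α × α),
      {n | ∃ A : Finset (α × α), A ⊆ F ∧ AcyclicEdges (↑A : Set (α × α)) ∧
        n = A.card}.Nonempty :=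
    fun F => ⟨0, ∅, Finset.empty_subset _, acyclic_empty, by simp⟩
  have hbdd : ∀ F : Finset (α × α),
      BddAbove {n | ∃ A : Finset (α × α), A ⊆ F ∧ AcyclicEdges (↑A : Set (α × α)) ∧
        n = A.card} := by
    intro F
    refine ⟨F.card, ?_⟩
    rintro n ⟨A, hA, -, rfl⟩
    exact Finset.card_le_card hA
  have part2 : maxAcyclic E = maxAcyclic E' + k := by
    have hle : maxAcyclic E ≤ maxAcyclic E' + k := by
      obtain ⟨B, hBE, hBac, hBcard⟩ := Nat.sSup_mem (hne_set E) (hbdd E)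
      have hnoloop : ∀ e ∈ B, e.1 ≠ e.2 := by
        intro e he heq
        refine hBac e.1 (Relation.TransGen.single ?_)
        have : (e.1, e.2) ∈ B := by simpa using he
        rw [← heq] at this
        exact_mod_cast this
      set A : Finset (α × α) := B.filter (fun e => e.1 ≠ e.2 ∧ (e.2, e.1) ∉ E)
        with hA
      have hAE' : A ⊆ E' := by
        rw [hA, hE']
        exact Finset.filter_subset_filter _ hBE
      have hAB : A ⊆ B := Finset.filter_subset _ _
      have hAac : AcyclicEdges (↑A : Set (α × α)) :=
        acyclic_mono (Finset.coe_subset.mpr hAB) hBac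
      have hAle : A.card ≤ maxAcyclic E' :=
        le_csSup (hbdd E') ⟨A, hAE', hAac, rfl⟩
      set S : Finset (α × α) := B \ A with hS
      have hSP : S ⊆ P := by
        intro e he
        rw [hS, Finset.mem_sdiff] at he
        obtain ⟨heB, heA⟩ := he
        rw [hA, Finset.mem_filter] at heA
        push_neg at heA
        have hne := hnoloop e heB
        rw [hP, Finset.mem_filter]
        exact ⟨hBE heB, hne, heA heB hne⟩
      have hnoanti : ∀ e ∈ B, e.swap ∉ B := by
        intro e he hswap
        have h1 : Relation.TransGen (fun a b : α => (a, b) ∈ (↑B : Set (α × α)))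
            e.1 e.2 := by
          refine Relation.TransGen.single ?_
          have : (e.1, e.2) ∈ B := by simpa using he
          exact_mod_cast this
        refine hBac e.1 (h1.tail ?_)
        exact_mod_cast hswap
      have hScard : S.card ≤ k := by
        have hdisj : Disjoint S (S.image Prod.swap) := by
          rw [Finset.disjoint_left]
          rintro f hfS hfT
          obtain ⟨e, heS, rfl⟩ := Finset.mem_image.mp hfT
          have heB : e ∈ B := (Finset.sdiff_subset) heS
          have hfB : e.swap ∈ B := (Finset.sdiff_subset) hfS
          exact hnoanti e heB hfB
        have hTP : S.image Prod.swap ⊆ P := by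
          intro f hf
          obtain ⟨e, heS, rfl⟩ := Finset.mem_image.mp hf
          have := (hPsym e (hSP heS)).2
          exact this
        have hcard2 : S.card + (S.image Prod.swap).card ≤ P.card := by
          rw [← Finset.card_union_of_disjoint hdisj]
          exact Finset.card_le_card (Finset.union_subset hSP hTP)
        rw [Finset.card_image_of_injective _ Prod.swap_injective] at hcard2
        omega
      have hBsplit : B.card = A.card + S.card := by
        rw [hS, Finset.card_sdiff_of_subset hAB]
        have := Finset.card_le_card hAB
        omega
      have hEq : maxAcyclic E = B.card := hBcard
      omega
    have hge : maxAcyclic E' + k ≤ maxAcyclic E := by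
      obtain ⟨A, hAE', hAac, hAcard⟩ := Nat.sSup_mem (hne_set E') (hbdd E')
      have hAcard' : maxAcyclic E' = A.card := hAcard
      obtain ⟨B, hBE, hBac, hAB, hBcard⟩ := part1 A hAE' hAac
      have : B.card ≤ maxAcyclic E := le_csSup (hbdd E) ⟨B, hBE, hBac, rfl⟩
      omega
    omega
  refine ⟨part1, part2, ?_⟩
  intro h v
  have h1 : indeg E' v ≤ indeg E v :=
    Finset.card_le_card (Finset.filter_subset_filter _ hE'E)
  have h2 : outdeg E' v ≤ outdeg E v :=
    Finset.card_le_card (Finset.filter_subset_filter _ hE'E)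
  have := h v
  omega


end MorseApprox
end
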